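/- arXiv:1106.3199 — 7 statements merged into one kernel-verified Lean document; each statement's English description precedes it below -/
import Mathlib

section
/- Let a < b be real numbers, let f, g : [a,b] → ℝ, and let c > 0. If sup_{s ∈ [a,b]} |f(s) − g(s)| ≤ c/2, then TV(g,[a,b]) ≥ TV^c(f,[a,b]) (as elements of [0,∞]). -/
open Set Filter Topology ENNReal

/-- Truncated variation `TV^c(f,[a,b])` as a supremum over partitions, valued in `[0,∞]`. -/
noncomputable def truncVar (f : ℝ → ℝ) (a b c : ℝ) : ℝ≥0∞ :=
  ⨆ (n : ℕ) (t : ℕ → ℝ) (_ : a ≤ t 0) (_ : ∀ i < n, t i < t (i + 1)) (_ : t n ≤ b),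
    ∑ i ∈ Finset.range n, ENNReal.ofReal (max (|f (t (i + 1)) - f (t i)| - c) 0)

/-- Total variation `TV(f,[a,b])`, valued in `[0,∞]`. -/
noncomputable def totalVar (f : ℝ → ℝ) (a b : ℝ) : ℝ≥0∞ := truncVar f a b 0

/-- Upward truncated variation `UTV^c(f,[a,b])`. -/
noncomputable def upTruncVar (f : ℝ → ℝ) (a b c : ℝ) : ℝ≥0∞ :=
  ⨆ (n : ℕ) (t : ℕ → ℝ) (_ : a ≤ t 0) (_ : ∀ i < n, t i < t (i + 1)) (_ : t n ≤ b),
    ∑ i ∈ Finset.range n, ENNReal.ofReal (max (f (t (i + 1)) - f (t i) - c) 0)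

/-- Downward truncated variation `DTV^c(f,[a,b])`. -/
noncomputable def downTruncVar (f : ℝ → ℝ) (a b c : ℝ) : ℝ≥0∞ :=
  ⨆ (n : ℕ) (t : ℕ → ℝ) (_ : a ≤ t 0) (_ : ∀ i < n, t i < t (i + 1)) (_ : t n ≤ b),
    ∑ i ∈ Finset.range n, ENNReal.ofReal (max (f (t i) - f (t (i + 1)) - c) 0)

/-- `f` is càdlàg on `[a,b]`: right-continuous at every point of `[a,b)` and
with a finite left limit at every point of `(a,b]`. -/
def CadlagOn (f : ℝ → ℝ) (a b : ℝ) : Prop :=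
  (∀ x ∈ Set.Ico a b, Filter.Tendsto f (𝓝[>] x) (𝓝 (f x))) ∧
  (∀ x ∈ Set.Ioc a b, ∃ L : ℝ, Filter.Tendsto f (𝓝[<] x) (𝓝 L))

/-- If `g` uniformly approximates `f` on `[a,b]` with accuracy `c/2`, then
`TV(g,[a,b]) ≥ TV^c(f,[a,b])`. -/
theorem tv_ge_truncVar_of_uniform_approx
    (a b c : ℝ) (hab : a < b) (hc : 0 < c) (f g : ℝ → ℝ)
    (happrox : ∀ s ∈ Set.Icc a b, |f s - g s| ≤ c / 2) :
    truncVar f a b c ≤ totalVar g a b := by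
  unfold totalVar truncVar
  refine iSup_le fun n => iSup_le fun t => iSup_le fun h0 => iSup_le fun hmono =>
    iSup_le fun hn => ?_
  refine le_trans ?_ (le_iSup_of_le n (le_iSup_of_le t (le_iSup_of_le h0
    (le_iSup_of_le hmono (le_iSup_of_le hn le_rfl)))))
  have hmono' : ∀ i j, i ≤ j → j ≤ n → t i ≤ t j := by
    intro i j hij hjn
    induction j with
    | zero => simp_all
    | succ k ih =>
      rcases Nat.eq_or_lt_of_le hij with h | h
      · simp [h]
      · exact le_trans (ih (Nat.lt_succ_iff.mp h) (le_trans (Nat.le_succ k) hjn))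
          (hmono k (Nat.lt_of_succ_le hjn)).le
  have hmem : ∀ i ≤ n, t i ∈ Set.Icc a b := fun i hi =>
    ⟨le_trans h0 (hmono' 0 i (Nat.zero_le i) hi), le_trans (hmono' i n hi le_rfl) hn⟩
  refine Finset.sum_le_sum fun i hi => ?_
  have hi' := Finset.mem_range.mp hi
  apply ENNReal.ofReal_le_ofReal
  have h1 := happrox (t (i+1)) (hmem (i+1) hi')
  have h2 := happrox (t i) (hmem i hi'.le)
  have key : |f (t (i+1)) - f (t i)| ≤ |g (t (i+1)) - g (t i)| + c := by
    have : f (t (i+1)) - f (t i) =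
        (f (t (i+1)) - g (t (i+1))) + (g (t (i+1)) - g (t i)) + (g (t i) - f (t i)) := by
      ring
    rw [this]
    calc |(f (t (i+1)) - g (t (i+1))) + (g (t (i+1)) - g (t i)) + (g (t i) - f (t i))|
        ≤ |f (t (i+1)) - g (t (i+1))| + |g (t (i+1)) - g (t i)| + |g (t i) - f (t i)| := by
          exact le_trans (abs_add_le _ _) (by gcongr; exact abs_add_le _ _)
      _ ≤ c/2 + |g (t (i+1)) - g (t i)| + c/2 := by
          rw [abs_sub_comm (g (t i))]; gcongr
      _ = |g (t (i+1)) - g (t i)| + c := by ring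
  simp only [sub_zero]
  rw [max_le_iff]
  constructor
  · linarith [le_max_left (|g (t (i+1)) - g (t i)|) (0:ℝ)]
  · exact le_max_right _ _
end

section
/- Let a < b, let f : [a,b] → ℝ be càdlàg on [a,b], and let c > 0 satisfy c ≤ sup_{s,u ∈ [a,b]} |f(s) − f(u)|. Suppose g₁, g₂ : [a,b] → ℝ each satisfy: sup_{s ∈ [a,b]} |f(s) − gᵢ(s)| ≤ c/2, TV(gᵢ,[a,b]) < ∞, and TV(gᵢ,[a,s]) ≤ TV^c(f,[a,s]) for every s ∈ (a,b]. Then g₁ = g₂ on [a,b]. -/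
open Set Filter Topology ENNReal

/-!
For an optimal approximation `g` and `a < s ≤ b`, an endpoint partition of `[a,s]` gives
`2·UTV^c(f,[a,s]) ≤ TV(g,[a,s]) + (g s - g a)` and `2·DTV^c(f,[a,s]) ≤ TV(g,[a,s]) - (g s - g a)`,
while `TV(g,[a,s]) ≤ TV^c(f,[a,s]) ≤ UTV^c + DTV^c`. Hence all three are equalities and
`g s - g a = UTV^c(f,[a,s]) - DTV^c(f,[a,s])`, so `g₁ - g₂` is a constant `d`. Then `g₁ - d/2`
approximates `f` within `(c - |d|)/2`, giving `TV^{c-|d|}(f) ≤ TV(g₁) ≤ TV^c(f)`; but since the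
oscillation of `f` reaches `c`, lowering the truncation level by `|d|` raises the truncated
variation by at least `|d|`. So `d = 0`.
-/

noncomputable def partitionVar (F : ℝ → ℝ → ℝ≥0∞) (a b : ℝ) : ℝ≥0∞ :=
  ⨆ (n : ℕ) (t : ℕ → ℝ) (_ : a ≤ t 0) (_ : ∀ i < n, t i < t (i + 1)) (_ : t n ≤ b),
    ∑ i ∈ Finset.range n, F (t i) (t (i + 1))

section Partition

variable {a b : ℝ} {n : ℕ} {t : ℕ → ℝ}

lemma partition_mem_Icc (h0 : a ≤ t 0) (ht : ∀ i < n, t i < t (i + 1)) (hn : t n ≤ b)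
    {i : ℕ} (hi : i ≤ n) : t i ∈ Icc a b := by
  have hmono : MonotoneOn t (Iic n) :=
    (strictMonoOn_Iic_of_lt_succ fun m hm => by simpa using ht m hm).monotoneOn
  exact ⟨h0.trans (hmono (Nat.zero_le n) hi (Nat.zero_le i)), (hmono hi (le_refl n) hi).trans hn⟩

lemma exists_partition_snoc (ht : ∀ i < n, t i < t (i + 1)) (hb : t n < b) :
    ∃ u : ℕ → ℝ, u 0 = t 0 ∧ (∀ i < n + 1, u i < u (i + 1)) ∧ u (n + 1) = b ∧
      ∀ F : ℝ → ℝ → ℝ≥0∞, ∑ i ∈ Finset.range n, F (t i) (t (i + 1)) ≤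
        ∑ i ∈ Finset.range (n + 1), F (u i) (u (i + 1)) := by
  refine ⟨fun i => if i ≤ n then t i else b, by simp, fun i hi => ?_, by simp, fun F => ?_⟩
  · rcases (Nat.lt_succ_iff.1 hi).lt_or_eq with hi | rfl
    · simpa [hi.le, Nat.succ_le_of_lt hi] using ht i hi
    · simpa using hb
  · rw [Finset.sum_range_succ]
    refine le_add_right (Finset.sum_le_sum fun i hi => ?_)
    have hi := Finset.mem_range.1 hi
    simp [hi.le, Nat.succ_le_of_lt hi]

lemma exists_partition_cons (ht : ∀ i < n, t i < t (i + 1)) (ha : a < t 0) :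
    ∃ u : ℕ → ℝ, u 0 = a ∧ (∀ i < n + 1, u i < u (i + 1)) ∧ u (n + 1) = t n ∧
      ∀ F : ℝ → ℝ → ℝ≥0∞, ∑ i ∈ Finset.range n, F (t i) (t (i + 1)) ≤
        ∑ i ∈ Finset.range (n + 1), F (u i) (u (i + 1)) := by
  refine ⟨fun i => if i = 0 then a else t (i - 1), rfl, fun i hi => ?_, by simp, fun F => ?_⟩
  · cases i with
    | zero => simpa using ha
    | succ j => simpa using ht j (by omega)
  · rw [Finset.sum_range_succ']
    exact le_add_right (by simp)

lemma exists_partition_endpoints (h0 : a ≤ t 0) (ht : ∀ i < n, t i < t (i + 1)) (hn : t n ≤ b) :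
    ∃ (m : ℕ) (u : ℕ → ℝ), u 0 = a ∧ (∀ i < m, u i < u (i + 1)) ∧ u m = b ∧
      ∀ F : ℝ → ℝ → ℝ≥0∞, ∑ i ∈ Finset.range n, F (t i) (t (i + 1)) ≤
        ∑ i ∈ Finset.range m, F (u i) (u (i + 1)) := by
  obtain ⟨m, v, hv0, hv, hvm, htv⟩ : ∃ (m : ℕ) (v : ℕ → ℝ), v 0 = t 0 ∧
      (∀ i < m, v i < v (i + 1)) ∧ v m = b ∧ ∀ F : ℝ → ℝ → ℝ≥0∞,
        ∑ i ∈ Finset.range n, F (t i) (t (i + 1)) ≤ ∑ i ∈ Finset.range m, F (v i) (v (i + 1)) := by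
    rcases hn.eq_or_lt with hn | hn
    · exact ⟨n, t, rfl, ht, hn, fun _ => le_rfl⟩
    · exact ⟨n + 1, exists_partition_snoc ht hn⟩
  rcases h0.eq_or_lt with h0 | h0
  · exact ⟨m, v, hv0.trans h0.symm, hv, hvm, htv⟩
  · obtain ⟨u, hu0, hu, hum, hvu⟩ := exists_partition_cons hv (hv0 ▸ h0)
    exact ⟨m + 1, u, hu0, hu, hum.trans hvm, fun F => (htv F).trans (hvu F)⟩

end Partition

section PartitionVar

variable {F G : ℝ → ℝ → ℝ≥0∞} {a b : ℝ}

lemma le_partitionVar {n : ℕ} {t : ℕ → ℝ} (h0 : a ≤ t 0) (ht : ∀ i < n, t i < t (i + 1))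
    (hn : t n ≤ b) : ∑ i ∈ Finset.range n, F (t i) (t (i + 1)) ≤ partitionVar F a b :=
  le_iSup_of_le n <| le_iSup_of_le t <| le_iSup_of_le h0 <| le_iSup_of_le ht <|
    le_iSup_of_le hn le_rfl

lemma partitionVar_le {X : ℝ≥0∞} (h : ∀ (n : ℕ) (t : ℕ → ℝ), a ≤ t 0 →
      (∀ i < n, t i < t (i + 1)) → t n ≤ b → ∑ i ∈ Finset.range n, F (t i) (t (i + 1)) ≤ X) :
    partitionVar F a b ≤ X :=
  iSup_le fun n => iSup_le fun t => iSup_le fun h0 => iSup_le fun ht => iSup_le fun hn =>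
    h n t h0 ht hn

lemma le_partitionVar_of_lt {u v : ℝ} (hu : a ≤ u) (huv : u < v) (hv : v ≤ b) :
    F u v ≤ partitionVar F a b := by
  simpa using le_partitionVar (F := F) (n := 1) (t := fun i => if i = 0 then u else v)
    hu (by simpa using huv) hv

lemma partitionVar_mono (h : ∀ u ∈ Icc a b, ∀ v ∈ Icc a b, u < v → F u v ≤ G u v) :
    partitionVar F a b ≤ partitionVar G a b :=
  partitionVar_le fun n t h0 ht hn => (Finset.sum_le_sum fun i hi => by
    have hi := Finset.mem_range.1 hi
    exact h _ (partition_mem_Icc h0 ht hn hi.le) _ (partition_mem_Icc h0 ht hn hi) (ht i hi)).trans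
    (le_partitionVar h0 ht hn)

lemma partitionVar_mono_right {b' : ℝ} (hb : b ≤ b') : partitionVar F a b ≤ partitionVar F a b' :=
  partitionVar_le fun _ _ h0 ht hn => le_partitionVar h0 ht (hn.trans hb)

lemma partitionVar_add_le :
    partitionVar (fun u v => F u v + G u v) a b ≤ partitionVar F a b + partitionVar G a b :=
  partitionVar_le fun _ _ h0 ht hn => Finset.sum_add_distrib.trans_le
    (add_le_add (le_partitionVar h0 ht hn) (le_partitionVar h0 ht hn))

end PartitionVar

section TruncVar

variable {f g : ℝ → ℝ} {a b c : ℝ}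

lemma truncVar_eq_partitionVar (f : ℝ → ℝ) (a b c : ℝ) :
    truncVar f a b c = partitionVar (fun u v => ENNReal.ofReal (max (|f v - f u| - c) 0)) a b :=
  rfl

lemma upTruncVar_eq_partitionVar (f : ℝ → ℝ) (a b c : ℝ) :
    upTruncVar f a b c = partitionVar (fun u v => ENNReal.ofReal (max (f v - f u - c) 0)) a b :=
  rfl

lemma downTruncVar_eq_partitionVar (f : ℝ → ℝ) (a b c : ℝ) :
    downTruncVar f a b c = partitionVar (fun u v => ENNReal.ofReal (max (f u - f v - c) 0)) a b :=
  rfl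

lemma totalVar_eq_partitionVar (g : ℝ → ℝ) (a b : ℝ) :
    totalVar g a b = partitionVar (fun u v => ENNReal.ofReal |g v - g u|) a b := by
  simp [totalVar, truncVar_eq_partitionVar]

lemma totalVar_sub_const (g : ℝ → ℝ) (k a b : ℝ) :
    totalVar (fun x => g x - k) a b = totalVar g a b := by
  simp [totalVar_eq_partitionVar]

lemma totalVar_neg (g : ℝ → ℝ) (a b : ℝ) : totalVar (-g) a b = totalVar g a b := by
  simp only [totalVar_eq_partitionVar, Pi.neg_apply, neg_sub_neg, abs_sub_comm]

lemma downTruncVar_eq_upTruncVar_neg (f : ℝ → ℝ) (a b c : ℝ) :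
    downTruncVar f a b c = upTruncVar (-f) a b c := by
  simp only [downTruncVar_eq_partitionVar, upTruncVar_eq_partitionVar, Pi.neg_apply, neg_sub_neg]

lemma truncVar_mono_right {b' : ℝ} (hb : b ≤ b') : truncVar f a b c ≤ truncVar f a b' c := by
  simpa only [truncVar_eq_partitionVar] using partitionVar_mono_right hb

lemma truncVar_le_upTruncVar_add_downTruncVar :
    truncVar f a b c ≤ upTruncVar f a b c + downTruncVar f a b c := by
  rw [truncVar_eq_partitionVar, upTruncVar_eq_partitionVar, downTruncVar_eq_partitionVar]
  refine (partitionVar_mono fun u _ v _ _ => ?_).trans partitionVar_add_le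
  rw [← ENNReal.ofReal_add (le_max_right _ _) (le_max_right _ _)]
  refine ENNReal.ofReal_le_ofReal (max_le ?_ (by positivity))
  rcases abs_cases (f v - f u) with ⟨h, -⟩ | ⟨h, -⟩ <;>
    linarith [le_max_left (f v - f u - c) 0, le_max_right (f v - f u - c) 0,
      le_max_left (f u - f v - c) 0, le_max_right (f u - f v - c) 0]

lemma truncVar_le_totalVar_of_abs_sub_le (h : ∀ x ∈ Icc a b, |f x - g x| ≤ c / 2) :
    truncVar f a b c ≤ totalVar g a b := by
  rw [truncVar_eq_partitionVar, totalVar_eq_partitionVar]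
  refine partitionVar_mono fun u hu v hv _ => ENNReal.ofReal_le_ofReal (max_le ?_ (abs_nonneg _))
  have := abs_sub_le (f v) (g v) (f u)
  have := abs_sub_le (g v) (g u) (f u)
  linarith [h u hu, h v hv, abs_sub_comm (g u) (f u)]

lemma ofReal_abs_sub_le_truncVar (hc : 0 ≤ c) {u v : ℝ} (hu : u ∈ Icc a b) (hv : v ∈ Icc a b) :
    ENNReal.ofReal (|f v - f u| - c) ≤ truncVar f a b c := by
  wlog huv : u ≤ v generalizing u v
  · rw [abs_sub_comm]
    exact this hv hu (le_of_not_ge huv)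
  rw [truncVar_eq_partitionVar]
  rcases huv.eq_or_lt with rfl | huv
  · simp [ENNReal.ofReal_of_nonpos (neg_nonpos.2 hc)]
  · exact (ENNReal.ofReal_le_ofReal (le_max_left _ _)).trans
      (le_partitionVar_of_lt hu.1 huv hv.2)

lemma iSup_abs_sub_le_truncVar (hc : 0 ≤ c) (hfin : truncVar f a b c ≠ ⊤) :
    ⨆ s ∈ Icc a b, ⨆ u ∈ Icc a b, |f s - f u| ≤ c + (truncVar f a b c).toReal := by
  have h0 : 0 ≤ c + (truncVar f a b c).toReal := by positivity
  refine Real.iSup_le (fun s => Real.iSup_le (fun hs => Real.iSup_le (fun u => Real.iSup_le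
    (fun hu => ?_) h0) h0) h0) h0
  have := (ENNReal.ofReal_le_iff_le_toReal hfin).1 (ofReal_abs_sub_le_truncVar hc hu hs)
  linarith

lemma truncVar_add_le_truncVar_sub {δ : ℝ} (hδ : 0 ≤ δ)
    (hosc : ENNReal.ofReal δ ≤ truncVar f a b (c - δ)) :
    truncVar f a b c + ENNReal.ofReal δ ≤ truncVar f a b (c - δ) := by
  simp only [truncVar_eq_partitionVar] at hosc ⊢
  have key : ∀ (n : ℕ) (t : ℕ → ℝ), a ≤ t 0 → (∀ i < n, t i < t (i + 1)) → t n ≤ b →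
      ∑ i ∈ Finset.range n, ENNReal.ofReal (max (|f (t (i + 1)) - f (t i)| - c) 0) +
        ENNReal.ofReal δ ≤
          partitionVar (fun u v => ENNReal.ofReal (max (|f v - f u| - (c - δ)) 0)) a b := by
    intro n t h0 ht hn
    rcases eq_or_ne (∑ i ∈ Finset.range n,
      ENNReal.ofReal (max (|f (t (i + 1)) - f (t i)| - c) 0)) 0 with hS | hS
    · rwa [hS, zero_add]
    -- some increment exceeds `c`, and lowering the level by `δ` raises that term by `δ`
    obtain ⟨i, hi, hne⟩ := Finset.exists_ne_zero_of_sum_ne_zero hS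
    have hbig : c < |f (t (i + 1)) - f (t i)| := by
      by_contra! hle
      exact hne (ENNReal.ofReal_eq_zero.2 (max_le (by linarith) le_rfl))
    refine le_trans ?_ (le_partitionVar h0 ht hn)
    rw [← Finset.add_sum_erase _ _ hi, ← Finset.add_sum_erase _ _ hi, add_right_comm,
      ← ENNReal.ofReal_add (le_max_right _ _) hδ]
    have hδc : c - δ ≤ c := sub_le_self c hδ
    gcongr with j
    rw [max_eq_left (by linarith)]
    exact le_max_of_le_left (by linarith)
  calc _ ≤ partitionVar (fun u v => ENNReal.ofReal (max (|f v - f u| - (c - δ)) 0)) a b -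
        ENNReal.ofReal δ + ENNReal.ofReal δ := by
        gcongr
        exact partitionVar_le fun n t h0 ht hn =>
          ENNReal.le_sub_of_add_le_right ENNReal.ofReal_ne_top (key n t h0 ht hn)
    _ = _ := tsub_add_cancel_of_le hosc

lemma truncVar_add_le_truncVar_sub_of_le_iSup {δ : ℝ} (hδ : 0 ≤ δ) (hδc : δ ≤ c)
    (hcsup : c ≤ ⨆ s ∈ Icc a b, ⨆ u ∈ Icc a b, |f s - f u|)
    (hfin : truncVar f a b (c - δ) ≠ ⊤) :
    truncVar f a b c + ENNReal.ofReal δ ≤ truncVar f a b (c - δ) :=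
  truncVar_add_le_truncVar_sub hδ <| ENNReal.ofReal_le_of_le_toReal <| by
    linarith [iSup_abs_sub_le_truncVar (f := f) (sub_nonneg.2 hδc) hfin]

lemma two_mul_sum_max_zero_sub (g : ℝ → ℝ) (m : ℕ) (u : ℕ → ℝ) :
    2 * ∑ i ∈ Finset.range m, max (g (u (i + 1)) - g (u i)) 0 =
      ∑ i ∈ Finset.range m, |g (u (i + 1)) - g (u i)| + (g (u m) - g (u 0)) := by
  rw [← Finset.sum_range_sub (fun i => g (u i)), Finset.mul_sum, ← Finset.sum_add_distrib]
  refine Finset.sum_congr rfl fun i _ => ?_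
  linarith [max_zero_add_max_neg_zero_eq_abs_self (g (u (i + 1)) - g (u i)),
    max_zero_sub_max_neg_zero_eq_self (g (u (i + 1)) - g (u i))]

lemma upTruncVar_le_of_abs_sub_le (h : ∀ x ∈ Icc a b, |f x - g x| ≤ c / 2)
    (hT : totalVar g a b ≠ ⊤) :
    upTruncVar f a b c ≤ ENNReal.ofReal (((totalVar g a b).toReal + (g b - g a)) / 2) := by
  rw [upTruncVar_eq_partitionVar]
  refine partitionVar_le fun n t h0 ht hn => ?_
  obtain ⟨m, u, hu0, hu, hum, htu⟩ := exists_partition_endpoints h0 ht hn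
  have hmem {i : ℕ} (hi : i ≤ m) : u i ∈ Icc a b := partition_mem_Icc hu0.ge hu hum.le hi
  have hTu : ∑ i ∈ Finset.range m, |g (u (i + 1)) - g (u i)| ≤ (totalVar g a b).toReal := by
    rw [← ENNReal.ofReal_le_iff_le_toReal hT, ENNReal.ofReal_sum_of_nonneg fun _ _ => abs_nonneg _,
      totalVar_eq_partitionVar]
    exact le_partitionVar hu0.ge hu hum.le
  have hup := two_mul_sum_max_zero_sub g m u
  rw [hu0, hum] at hup
  calc ∑ i ∈ Finset.range n, ENNReal.ofReal (max (f (t (i + 1)) - f (t i) - c) 0)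
      ≤ ∑ i ∈ Finset.range m, ENNReal.ofReal (max (f (u (i + 1)) - f (u i) - c) 0) :=
        htu fun u v => ENNReal.ofReal (max (f v - f u - c) 0)
    _ ≤ ∑ i ∈ Finset.range m, ENNReal.ofReal (max (g (u (i + 1)) - g (u i)) 0) := by
        refine Finset.sum_le_sum fun i hi => ENNReal.ofReal_le_ofReal (max_le_max ?_ le_rfl)
        have hi := Finset.mem_range.1 hi
        have h₁ := abs_le.1 (h _ (hmem hi.le))
        have h₂ := abs_le.1 (h _ (hmem hi))
        linarith [h₁.1, h₂.2]
    _ = ENNReal.ofReal (∑ i ∈ Finset.range m, max (g (u (i + 1)) - g (u i)) 0) :=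
        (ENNReal.ofReal_sum_of_nonneg fun _ _ => le_max_right _ _).symm
    _ ≤ ENNReal.ofReal (((totalVar g a b).toReal + (g b - g a)) / 2) :=
        ENNReal.ofReal_le_ofReal (by linarith)

lemma downTruncVar_le_of_abs_sub_le (h : ∀ x ∈ Icc a b, |f x - g x| ≤ c / 2)
    (hT : totalVar g a b ≠ ⊤) :
    downTruncVar f a b c ≤ ENNReal.ofReal (((totalVar g a b).toReal - (g b - g a)) / 2) := by
  have := upTruncVar_le_of_abs_sub_le (f := -f) (g := -g)
    (fun x hx => by rw [Pi.neg_apply, Pi.neg_apply, neg_sub_neg, abs_sub_comm]; exact h x hx)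
    (by rwa [totalVar_neg])
  rw [totalVar_neg] at this
  rw [downTruncVar_eq_upTruncVar_neg]
  convert this using 4
  simp only [Pi.neg_apply]
  ring

lemma sub_eq_upTruncVar_sub_downTruncVar (hab : a ≤ b) (h : ∀ x ∈ Icc a b, |f x - g x| ≤ c / 2)
    (hT : totalVar g a b ≠ ⊤) (hopt : totalVar g a b ≤ truncVar f a b c) :
    g b - g a = (upTruncVar f a b c).toReal - (downTruncVar f a b c).toReal := by
  have hU := upTruncVar_le_of_abs_sub_le h hT
  have hD := downTruncVar_le_of_abs_sub_le h hT
  have hinc : |g b - g a| ≤ (totalVar g a b).toReal := by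
    have := ofReal_abs_sub_le_truncVar (f := g) le_rfl (left_mem_Icc.2 hab) (right_mem_Icc.2 hab)
    rw [sub_zero] at this
    exact (ENNReal.ofReal_le_iff_le_toReal hT).1 this
  have hUfin := ne_top_of_le_ne_top ENNReal.ofReal_ne_top hU
  have hDfin := ne_top_of_le_ne_top ENNReal.ofReal_ne_top hD
  have hsplit : (totalVar g a b).toReal ≤
      (upTruncVar f a b c).toReal + (downTruncVar f a b c).toReal := by
    rw [← ENNReal.toReal_add hUfin hDfin]
    exact ENNReal.toReal_mono (ENNReal.add_ne_top.2 ⟨hUfin, hDfin⟩)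
      (hopt.trans truncVar_le_upTruncVar_add_downTruncVar)
  have hU' := ENNReal.toReal_le_of_le_ofReal (by linarith [abs_le.1 hinc]) hU
  have hD' := ENNReal.toReal_le_of_le_ofReal (by linarith [abs_le.1 hinc]) hD
  linarith

end TruncVar

lemma abs_sub_sub_half_le {x y d c : ℝ} (h₁ : |x - y| ≤ c / 2) (h₂ : |x - (y - d)| ≤ c / 2) :
    |x - (y - d / 2)| ≤ (c - |d|) / 2 := by
  rw [abs_le] at h₁ h₂ ⊢
  rcases abs_cases d with ⟨hd, -⟩ | ⟨hd, -⟩ <;> rw [hd] <;> constructor <;> linarith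

def IsOptimalApprox (f : ℝ → ℝ) (c a b : ℝ) (g : ℝ → ℝ) : Prop :=
  (∀ s ∈ Icc a b, |f s - g s| ≤ c / 2) ∧ totalVar g a b < ⊤ ∧
    ∀ s ∈ Ioc a b, totalVar g a s ≤ truncVar f a s c

namespace IsOptimalApprox

variable {f g g₁ g₂ : ℝ → ℝ} {a b c : ℝ}

lemma sub_left_eq (hg : IsOptimalApprox f c a b g) {s : ℝ} (hs : s ∈ Ioc a b) :
    g s - g a = (upTruncVar f a s c).toReal - (downTruncVar f a s c).toReal :=
  sub_eq_upTruncVar_sub_downTruncVar hs.1.le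
    (fun x hx => hg.1 x (Icc_subset_Icc_right hs.2 hx))
    (ne_top_of_le_ne_top hg.2.1.ne (truncVar_mono_right hs.2)) (hg.2.2 s hs)

lemma sub_eq_sub_left (h₁ : IsOptimalApprox f c a b g₁) (h₂ : IsOptimalApprox f c a b g₂)
    {s : ℝ} (hs : s ∈ Icc a b) : g₁ s - g₂ s = g₁ a - g₂ a := by
  rcases hs.1.eq_or_lt with rfl | has
  · rfl
  · linarith [h₁.sub_left_eq ⟨has, hs.2⟩, h₂.sub_left_eq ⟨has, hs.2⟩]

lemma shift_eq_zero (hg : IsOptimalApprox f c a b g) (hab : a < b)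
    (hcsup : c ≤ ⨆ s ∈ Icc a b, ⨆ u ∈ Icc a b, |f s - f u|) {d : ℝ}
    (hd : ∀ x ∈ Icc a b, |f x - (g x - d)| ≤ c / 2) : d = 0 := by
  obtain ⟨happrox, hfin, hopt⟩ := hg
  have ha := left_mem_Icc.2 hab.le
  have hdc : |d| ≤ c := by
    have := abs_sub_le (g a) (f a) (g a - d)
    rw [sub_sub_self, abs_sub_comm] at this
    linarith [happrox a ha, hd a ha]
  have hfinc : truncVar f a b c ≠ ⊤ :=
    ne_top_of_le_ne_top hfin.ne (truncVar_le_totalVar_of_abs_sub_le happrox)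
  have hle : truncVar f a b (c - |d|) ≤ truncVar f a b c :=
    calc truncVar f a b (c - |d|) ≤ totalVar (fun x => g x - d / 2) a b :=
          truncVar_le_totalVar_of_abs_sub_le fun x hx =>
            abs_sub_sub_half_le (happrox x hx) (hd x hx)
      _ = totalVar g a b := totalVar_sub_const g (d / 2) a b
      _ ≤ truncVar f a b c := hopt b ⟨hab, le_rfl⟩
  have hgap := (truncVar_add_le_truncVar_sub_of_le_iSup (abs_nonneg d) hdc hcsup
    (ne_top_of_le_ne_top hfinc hle)).trans hle
  have hzero := ENNReal.le_of_add_le_add_left hfinc (hgap.trans_eq (add_zero _).symm)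
  rw [nonpos_iff_eq_zero, ENNReal.ofReal_eq_zero] at hzero
  exact abs_nonpos_iff.1 hzero

end IsOptimalApprox

theorem optimal_uniform_approx_unique_general
    (a b c : ℝ) (hab : a < b) (f : ℝ → ℝ)
    (hcsup : c ≤ ⨆ s ∈ Set.Icc a b, ⨆ u ∈ Set.Icc a b, |f s - f u|)
    (g₁ g₂ : ℝ → ℝ)
    (happrox₁ : ∀ s ∈ Set.Icc a b, |f s - g₁ s| ≤ c / 2)
    (happrox₂ : ∀ s ∈ Set.Icc a b, |f s - g₂ s| ≤ c / 2)
    (hfin₁ : totalVar g₁ a b < ⊤) (hfin₂ : totalVar g₂ a b < ⊤)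
    (hopt₁ : ∀ s ∈ Set.Ioc a b, totalVar g₁ a s ≤ truncVar f a s c)
    (hopt₂ : ∀ s ∈ Set.Ioc a b, totalVar g₂ a s ≤ truncVar f a s c) :
    ∀ s ∈ Set.Icc a b, g₁ s = g₂ s := by
  have h₁ : IsOptimalApprox f c a b g₁ := ⟨happrox₁, hfin₁, hopt₁⟩
  have h₂ : IsOptimalApprox f c a b g₂ := ⟨happrox₂, hfin₂, hopt₂⟩
  have hd : g₁ a - g₂ a = 0 := h₁.shift_eq_zero hab hcsup fun x hx => by
    rw [← h₁.sub_eq_sub_left h₂ hx, sub_sub_self]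
    exact happrox₂ x hx
  intro s hs
  linarith [h₁.sub_eq_sub_left h₂ hs]

/-- Uniqueness of the optimal uniform approximation with minimal total variation. -/
theorem optimal_uniform_approx_unique
    (a b c : ℝ) (hab : a < b) (hc : 0 < c) (f : ℝ → ℝ) (hf : CadlagOn f a b)
    (hcsup : c ≤ ⨆ s ∈ Set.Icc a b, ⨆ u ∈ Set.Icc a b, |f s - f u|)
    (g₁ g₂ : ℝ → ℝ)
    (happrox₁ : ∀ s ∈ Set.Icc a b, |f s - g₁ s| ≤ c / 2)
    (happrox₂ : ∀ s ∈ Set.Icc a b, |f s - g₂ s| ≤ c / 2)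
    (hfin₁ : totalVar g₁ a b < ⊤) (hfin₂ : totalVar g₂ a b < ⊤)
    (hopt₁ : ∀ s ∈ Set.Ioc a b, totalVar g₁ a s ≤ truncVar f a s c)
    (hopt₂ : ∀ s ∈ Set.Ioc a b, totalVar g₂ a s ≤ truncVar f a s c) :
    ∀ s ∈ Set.Icc a b, g₁ s = g₂ s :=
  optimal_uniform_approx_unique_general a b c hab f hcsup g₁ g₂ happrox₁ happrox₂ hfin₁ hfin₂ hopt₁
    hopt₂
end

section
/- Let a < b, let f : [a,b] → ℝ be càdlàg on [a,b], and let c > 0. Suppose g : [a,b] → ℝ satisfies |(g(s) − g(u)) − (f(s) − f(u))| ≤ c for all a ≤ u < s ≤ b, has TV(g,[a,b]) < ∞, and admits nondecreasing functions g_U, g_D : [a,b] → [0,∞) with g_U(a) = g_D(a) = 0 and g(t) = g(a) + g_U(t) − g_D(t) for all t ∈ [a,b]. Then g_U(s) ≥ UTV^c(f,[a,s]) and g_D(s) ≥ DTV^c(f,[a,s]) for every s ∈ (a,b]. -/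
open Set Filter Topology ENNReal

/-!
Every increment of `f` exceeds the corresponding increment of `g` by at most `c`, and an increase
of `g` can only come from `gU`, so `f v - f u - c ≤ gU v - gU u` for `u < v`. Summing over a
partition, the increments of `gU` telescope to at most `gU s`; the downward case is symmetric.
-/

noncomputable def posPartVar (φ : ℝ → ℝ → ℝ) (a b : ℝ) : ℝ≥0∞ :=
  ⨆ (n : ℕ) (t : ℕ → ℝ) (_ : a ≤ t 0) (_ : ∀ i < n, t i < t (i + 1)) (_ : t n ≤ b),
    ∑ i ∈ Finset.range n, ENNReal.ofReal (max (φ (t i) (t (i + 1))) 0)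

lemma upTruncVar_eq_posPartVar (f : ℝ → ℝ) (a b c : ℝ) :
    upTruncVar f a b c = posPartVar (fun u v => f v - f u - c) a b := rfl

lemma downTruncVar_eq_posPartVar (f : ℝ → ℝ) (a b c : ℝ) :
    downTruncVar f a b c = posPartVar (fun u v => f u - f v - c) a b := rfl

lemma monotoneOn_Iic_of_lt_add_one {β : Type*} [Preorder β] {t : ℕ → β} {n : ℕ}
    (ht : ∀ i < n, t i < t (i + 1)) : MonotoneOn t (Iic n) :=
  monotoneOn_of_le_add_one ordConnected_Iic fun i _ _ hi => (ht i (Nat.lt_of_succ_le hi)).le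

lemma posPartVar_le_ofReal_of_le_sub {φ : ℝ → ℝ → ℝ} {G : ℝ → ℝ} {a b : ℝ}
    (hG : MonotoneOn G (Icc a b)) (hGnn : ∀ t ∈ Icc a b, 0 ≤ G t)
    (hφ : ∀ u ∈ Icc a b, ∀ v ∈ Icc a b, u < v → φ u v ≤ G v - G u) :
    posPartVar φ a b ≤ ENNReal.ofReal (G b) := by
  simp only [posPartVar, iSup_le_iff]
  intro n t h0 ht htn
  have htmono := monotoneOn_Iic_of_lt_add_one ht
  have hmem : ∀ i ≤ n, t i ∈ Icc a b := fun i hi =>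
    ⟨h0.trans (htmono (Nat.zero_le n) hi (Nat.zero_le i)),
      (htmono hi (le_refl n) hi).trans htn⟩
  have hincr : ∀ i ∈ Finset.range n, 0 ≤ G (t (i + 1)) - G (t i) := fun i hi =>
    have hi := Finset.mem_range.mp hi
    sub_nonneg.2 (hG (hmem i hi.le) (hmem (i + 1) hi) (ht i hi).le)
  calc ∑ i ∈ Finset.range n, ENNReal.ofReal (max (φ (t i) (t (i + 1))) 0)
      ≤ ∑ i ∈ Finset.range n, ENNReal.ofReal (G (t (i + 1)) - G (t i)) := by
        refine Finset.sum_le_sum fun i hi => ENNReal.ofReal_le_ofReal (max_le ?_ (hincr i hi))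
        have hi := Finset.mem_range.mp hi
        exact hφ _ (hmem i hi.le) _ (hmem (i + 1) hi) (ht i hi)
    _ = ENNReal.ofReal (G (t n) - G (t 0)) := by
        rw [← ENNReal.ofReal_sum_of_nonneg hincr, Finset.sum_range_sub (fun i => G (t i))]
    _ ≤ ENNReal.ofReal (G b) := by
        refine ENNReal.ofReal_le_ofReal ?_
        have hGtn : G (t n) ≤ G b := hG (hmem n le_rfl) ⟨(hmem n le_rfl).1.trans htn, le_rfl⟩ htn
        linarith [hGnn _ (hmem 0 (Nat.zero_le n))]

theorem jordan_parts_ge_truncVars_of_increment_approx_general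
    (a b c : ℝ) (f : ℝ → ℝ)
    (g gU gD : ℝ → ℝ)
    (hincr : ∀ u ∈ Set.Icc a b, ∀ s ∈ Set.Icc a b, u < s →
      |(g s - g u) - (f s - f u)| ≤ c)
    (hUmono : MonotoneOn gU (Set.Icc a b)) (hDmono : MonotoneOn gD (Set.Icc a b))
    (hUnn : ∀ t ∈ Set.Icc a b, 0 ≤ gU t) (hDnn : ∀ t ∈ Set.Icc a b, 0 ≤ gD t)
    (hdecomp : ∀ t ∈ Set.Icc a b, g t = g a + gU t - gD t) :
    ∀ s ∈ Set.Ioc a b,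
      upTruncVar f a s c ≤ ENNReal.ofReal (gU s) ∧
      downTruncVar f a s c ≤ ENNReal.ofReal (gD s) := by
  intro s ⟨_, hsb⟩
  have hsub : Icc a s ⊆ Icc a b := Icc_subset_Icc_right hsb
  have hup : ∀ u ∈ Icc a s, ∀ v ∈ Icc a s, u < v → f v - f u - c ≤ gU v - gU u :=
    fun u hu v hv huv => by
      have := abs_le.mp (hincr u (hsub hu) v (hsub hv) huv)
      linarith [hdecomp u (hsub hu), hdecomp v (hsub hv), hDmono (hsub hu) (hsub hv) huv.le]
  have hdown : ∀ u ∈ Icc a s, ∀ v ∈ Icc a s, u < v → f u - f v - c ≤ gD v - gD u :=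
    fun u hu v hv huv => by
      have := abs_le.mp (hincr u (hsub hu) v (hsub hv) huv)
      linarith [hdecomp u (hsub hu), hdecomp v (hsub hv), hUmono (hsub hu) (hsub hv) huv.le]
  rw [upTruncVar_eq_posPartVar, downTruncVar_eq_posPartVar]
  exact ⟨posPartVar_le_ofReal_of_le_sub (hUmono.mono hsub) (fun t ht => hUnn t (hsub ht)) hup,
    posPartVar_le_ofReal_of_le_sub (hDmono.mono hsub) (fun t ht => hDnn t (hsub ht)) hdown⟩

/-- If the increments of `g` approximate the increments of `f` with accuracy `c` and
`g = g(a) + g_U - g_D` with `g_U, g_D` nondecreasing, nonnegative and vanishing at `a`,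
then `g_U ≥ UTV^c` and `g_D ≥ DTV^c` on `(a,b]`. -/
theorem jordan_parts_ge_truncVars_of_increment_approx
    (a b c : ℝ) (hab : a < b) (hc : 0 < c) (f : ℝ → ℝ) (hf : CadlagOn f a b)
    (g gU gD : ℝ → ℝ)
    (hincr : ∀ u ∈ Set.Icc a b, ∀ s ∈ Set.Icc a b, u < s →
      |(g s - g u) - (f s - f u)| ≤ c)
    (hfin : totalVar g a b < ⊤)
    (hUmono : MonotoneOn gU (Set.Icc a b)) (hDmono : MonotoneOn gD (Set.Icc a b))
    (hUnn : ∀ t ∈ Set.Icc a b, 0 ≤ gU t) (hDnn : ∀ t ∈ Set.Icc a b, 0 ≤ gD t)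
    (hUa : gU a = 0) (hDa : gD a = 0)
    (hdecomp : ∀ t ∈ Set.Icc a b, g t = g a + gU t - gD t) :
    ∀ s ∈ Set.Ioc a b,
      upTruncVar f a s c ≤ ENNReal.ofReal (gU s) ∧
      downTruncVar f a s c ≤ ENNReal.ofReal (gD s) :=
  jordan_parts_ge_truncVars_of_increment_approx_general a b c f g gU gD hincr hUmono hDmono hUnn
    hDnn hdecomp
end

section
/- Let a < b, let f : [a,b] → ℝ be càdlàg on [a,b], and let c > 0. Then inf { TV(f+h,[a,b]) : h : [a,b] → ℝ, sup_{s,u ∈ [a,b]} |h(s) − h(u)| ≤ c } = TV^c(f,[a,b]), and this infimum is attained by some h with sup_{s,u ∈ [a,b]} |h(s) − h(u)| ≤ c. -/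
open Set Filter Topology ENNReal

/-!
If `TV^c(f) = ∞`, `h = 0` works. Otherwise let `U s = UTV^c(f, [a, s])`, `W s = DTV^c(f, [a, s])`
and `h = (U - W) - f`. Any `h` of oscillation at most `c` has `TV(f + h) ≥ TV^c(f)` termwise, while
`TV(U - W) ≤ U b + W b`; so it suffices that the residual `f - (U - W)` has oscillation at most `c`
and that `UTV^c + DTV^c ≤ TV^c`. Both only involve finitely many points at a time, so they reduce
to finite sequences, where `UTV^c`, `DTV^c`, `TV^c` satisfy a dynamic-programming recursion over the
last jump. The key observation is that a strict increase of `DTV^c` at `m` comes from a downward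
jump of size more than `c` ending at `m`, which lowers the residual by at least `c` (and dually
for `UTV^c`); induction on the length then bounds the oscillation of the residual, and with it
`UTV^c + DTV^c`.
-/

/-- The largest `ρ`-weight `∑ ρ (i l) (i (l + 1))` of a chain `i 0 < ⋯ < i m = k`
(for `ρ ≥ 0`). -/
noncomputable def chainSup (ρ : ℕ → ℕ → ℝ) : ℕ → ℝ
  | 0 => 0
  | k + 1 => Finset.univ.sup' Finset.univ_nonempty fun i : Fin (k + 1) => chainSup ρ i + ρ i (k + 1)

section chainSup

variable {ρ : ℕ → ℕ → ℝ}

theorem add_le_chainSup {j k : ℕ} (h : j < k) : chainSup ρ j + ρ j k ≤ chainSup ρ k := by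
  obtain ⟨k, rfl⟩ := Nat.exists_eq_succ_of_ne_zero h.ne_bot
  rw [chainSup]
  exact Finset.le_sup' (fun i : Fin (k + 1) => chainSup ρ i + ρ i (k + 1)) (Finset.mem_univ ⟨j, h⟩)

theorem exists_chainSup_succ_eq (ρ : ℕ → ℕ → ℝ) (k : ℕ) :
    ∃ j < k + 1, chainSup ρ (k + 1) = chainSup ρ j + ρ j (k + 1) := by
  obtain ⟨i, -, hi⟩ := Finset.exists_mem_eq_sup' Finset.univ_nonempty
    fun i : Fin (k + 1) => chainSup ρ i + ρ i (k + 1)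
  exact ⟨i, i.isLt, by rw [chainSup, hi]⟩

theorem chainSup_mono (hρ : ∀ i j, 0 ≤ ρ i j) : Monotone (chainSup ρ) :=
  monotone_nat_of_le_succ fun k => by
    linarith [add_le_chainSup (ρ := ρ) k.lt_succ_self, hρ k (k + 1)]

theorem chainSup_nonneg (hρ : ∀ i j, 0 ≤ ρ i j) (k : ℕ) : 0 ≤ chainSup ρ k := by
  simpa [chainSup] using chainSup_mono hρ k.zero_le

theorem sum_le_chainSup (hρ : ∀ i j, 0 ≤ ρ i j) {i : ℕ → ℕ} :
    ∀ {m : ℕ}, (∀ l < m, i l < i (l + 1)) →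
      ∑ l ∈ Finset.range m, ρ (i l) (i (l + 1)) ≤ chainSup ρ (i m)
  | 0, _ => by simpa using chainSup_nonneg hρ (i 0)
  | m + 1, hi => by
    rw [Finset.sum_range_succ]
    linarith [sum_le_chainSup hρ (m := m) fun l hl => hi l (by omega),
      add_le_chainSup (ρ := ρ) (hi m m.lt_succ_self)]

theorem exists_chain_sum_eq_chainSup (ρ : ℕ → ℕ → ℝ) (k : ℕ) :
    ∃ (m : ℕ) (i : ℕ → ℕ), (∀ l < m, i l < i (l + 1)) ∧ i m = k ∧
      ∑ l ∈ Finset.range m, ρ (i l) (i (l + 1)) = chainSup ρ k := by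
  induction k using Nat.strong_induction_on with
  | _ k ih =>
  rcases k with _ | k
  · exact ⟨0, fun _ => 0, by simp, rfl, by simp [chainSup]⟩
  obtain ⟨j, hj, hjk⟩ := exists_chainSup_succ_eq ρ k
  obtain ⟨m, i, hi, rfl, hsum⟩ := ih j hj
  have hupd : ∀ l ≤ m, Function.update i (m + 1) (k + 1) l = i l := fun l hl =>
    Function.update_of_ne (by omega) _ _
  refine ⟨m + 1, Function.update i (m + 1) (k + 1), fun l hl => ?_, by simp, ?_⟩
  · rcases (Nat.lt_succ_iff.mp hl).lt_or_eq with hl | rfl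
    · rw [hupd l hl.le, hupd (l + 1) hl]
      exact hi l hl
    · simpa [hupd l le_rfl] using hj
  · rw [Finset.sum_range_succ, hjk, ← hsum, Finset.sum_congr rfl fun l hl => by
      rw [hupd l (Finset.mem_range.mp hl).le, hupd (l + 1) (Finset.mem_range.mp hl)]]
    simp

end chainSup

noncomputable def upTruncVarSeq (v : ℕ → ℝ) (c : ℝ) : ℕ → ℝ :=
  chainSup fun i j => max (v j - v i - c) 0

noncomputable def downTruncVarSeq (v : ℕ → ℝ) (c : ℝ) : ℕ → ℝ :=
  chainSup fun i j => max (v i - v j - c) 0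

noncomputable def truncVarSeq (v : ℕ → ℝ) (c : ℝ) : ℕ → ℝ :=
  chainSup fun i j => max (|v j - v i| - c) 0

noncomputable def truncResidualSeq (v : ℕ → ℝ) (c : ℝ) (k : ℕ) : ℝ :=
  v k - upTruncVarSeq v c k + downTruncVarSeq v c k

theorem Monotone.exists_lt_succ_eq_of_lt {α : Type*} [PartialOrder α] {g : ℕ → α}
    (hg : Monotone g) {l k : ℕ} (hlk : l < k) (hlt : g l < g k) :
    ∃ m, l ≤ m ∧ m < k ∧ g m < g (m + 1) ∧ g (m + 1) = g k := by
  induction k with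
  | zero => omega
  | succ k ih =>
    by_cases hk : g k < g (k + 1)
    · exact ⟨k, by omega, k.lt_succ_self, hk, rfl⟩
    have heq : g k = g (k + 1) := (hg k.le_succ).eq_of_not_lt hk
    have hlk' : l < k := by
      rcases Nat.lt_succ_iff.mp hlk |>.lt_or_eq with h | rfl
      · exact h
      · exact absurd hlt hk
    obtain ⟨m, hlm, hmk, hinc, hm⟩ := ih hlk' (heq ▸ hlt)
    exact ⟨m, hlm, by omega, hinc, hm.trans heq⟩

section seq

variable {v : ℕ → ℝ} {c : ℝ}

theorem upTruncVarSeq_neg (v : ℕ → ℝ) (c : ℝ) : upTruncVarSeq (-v) c = downTruncVarSeq v c := by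
  simp only [upTruncVarSeq, downTruncVarSeq, Pi.neg_apply, neg_sub_neg]

theorem downTruncVarSeq_neg (v : ℕ → ℝ) (c : ℝ) : downTruncVarSeq (-v) c = upTruncVarSeq v c := by
  simpa using (upTruncVarSeq_neg (-v) c).symm

theorem truncVarSeq_neg (v : ℕ → ℝ) (c : ℝ) : truncVarSeq (-v) c = truncVarSeq v c := by
  simp only [truncVarSeq, Pi.neg_apply, neg_sub_neg, abs_sub_comm]

theorem truncResidualSeq_neg (v : ℕ → ℝ) (c : ℝ) (k : ℕ) :
    truncResidualSeq (-v) c k = -truncResidualSeq v c k := by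
  simp only [truncResidualSeq, upTruncVarSeq_neg, downTruncVarSeq_neg, Pi.neg_apply]
  ring

theorem upTruncVarSeq_mono : Monotone (upTruncVarSeq v c) :=
  chainSup_mono fun _ _ => le_max_right _ _

theorem downTruncVarSeq_mono : Monotone (downTruncVarSeq v c) :=
  chainSup_mono fun _ _ => le_max_right _ _

theorem truncVarSeq_mono : Monotone (truncVarSeq v c) :=
  chainSup_mono fun _ _ => le_max_right _ _

/-- The increase is realised by a downward jump of size more than `c` from some `v i`
to `v (m + 1)`. -/
theorem exists_truncResidualSeq_add_le_of_downTruncVarSeq_lt {m : ℕ}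
    (h : downTruncVarSeq v c m < downTruncVarSeq v c (m + 1)) :
    ∃ i < m + 1, truncResidualSeq v c (m + 1) + c ≤ truncResidualSeq v c i := by
  obtain ⟨i, hi, hWi⟩ := exists_chainSup_succ_eq (fun i j => max (v i - v j - c) 0) m
  have hWim : downTruncVarSeq v c i ≤ downTruncVarSeq v c m := downTruncVarSeq_mono (by omega)
  change downTruncVarSeq v c (m + 1) = downTruncVarSeq v c i + max (v i - v (m + 1) - c) 0 at hWi
  have hjump : 0 ≤ v i - v (m + 1) - c := by
    by_contra! hneg
    rw [max_eq_right hneg.le] at hWi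
    linarith
  rw [max_eq_left hjump] at hWi
  have hUi : upTruncVarSeq v c i ≤ upTruncVarSeq v c (m + 1) := upTruncVarSeq_mono hi.le
  refine ⟨i, hi, ?_⟩
  simp only [truncResidualSeq]
  linarith

theorem truncResidualSeq_sub_le_of_downTruncVarSeq_eq (hc : 0 ≤ c) {j k : ℕ} (hjk : j ≤ k)
    (h : downTruncVarSeq v c j = downTruncVarSeq v c k) :
    truncResidualSeq v c k - truncResidualSeq v c j ≤ c := by
  rcases hjk.lt_or_eq with hjk | rfl
  · have hU := add_le_chainSup (ρ := fun i j => max (v j - v i - c) 0) hjk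
    have := le_max_left (v k - v j - c) 0
    change upTruncVarSeq v c j + _ ≤ upTruncVarSeq v c k at hU
    simp only [truncResidualSeq]
    linarith
  · simpa using hc

theorem truncResidualSeq_sub_le_of_upTruncVarSeq_eq (hc : 0 ≤ c) {j k : ℕ} (hjk : j ≤ k)
    (h : upTruncVarSeq v c j = upTruncVarSeq v c k) :
    truncResidualSeq v c j - truncResidualSeq v c k ≤ c := by
  have := truncResidualSeq_sub_le_of_downTruncVarSeq_eq (v := -v) hc hjk
    (by simpa only [downTruncVarSeq_neg] using h)
  simp only [truncResidualSeq_neg] at this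
  linarith

/-- Take for `m` the last increase of `downTruncVarSeq` up to `k`: the jump there lowers the
residual by `c` below some earlier value, which by `hosc` is at most `c` above the value at `j`. -/
theorem exists_downTruncVarSeq_eq_truncResidualSeq_le {j k : ℕ} (hjk : j ≤ k)
    (hosc : ∀ p < k, ∀ q < k, truncResidualSeq v c p - truncResidualSeq v c q ≤ c) :
    ∃ m, j ≤ m ∧ m ≤ k ∧ downTruncVarSeq v c m = downTruncVarSeq v c k ∧
      truncResidualSeq v c m ≤ truncResidualSeq v c j := by
  rcases (downTruncVarSeq_mono (v := v) (c := c) hjk).lt_or_eq with hlt | heq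
  · have hjk' : j < k := lt_of_le_of_ne hjk (by rintro rfl; exact hlt.ne rfl)
    obtain ⟨m, hjm, hmk, hinc, heq⟩ := downTruncVarSeq_mono.exists_lt_succ_eq_of_lt hjk' hlt
    obtain ⟨i, hi, hDi⟩ := exists_truncResidualSeq_add_le_of_downTruncVarSeq_lt hinc
    have := hosc i (by omega) j hjk'
    exact ⟨m + 1, by omega, hmk, heq, by linarith⟩
  · exact ⟨j, le_rfl, hjk, heq, le_rfl⟩

theorem exists_upTruncVarSeq_eq_le_truncResidualSeq {j k : ℕ} (hjk : j ≤ k)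
    (hosc : ∀ p < k, ∀ q < k, truncResidualSeq v c p - truncResidualSeq v c q ≤ c) :
    ∃ m, j ≤ m ∧ m ≤ k ∧ upTruncVarSeq v c m = upTruncVarSeq v c k ∧
      truncResidualSeq v c j ≤ truncResidualSeq v c m := by
  obtain ⟨m, hjm, hmk, heq, hle⟩ := exists_downTruncVarSeq_eq_truncResidualSeq_le (v := -v) hjk
    fun p hp q hq => by simpa only [truncResidualSeq_neg, neg_sub_neg] using hosc q hq p hp
  simp only [downTruncVarSeq_neg, truncResidualSeq_neg, neg_le_neg_iff] at heq hle
  exact ⟨m, hjm, hmk, heq, hle⟩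

theorem truncResidualSeq_sub_le (hc : 0 ≤ c) (v : ℕ → ℝ) (k l : ℕ) :
    truncResidualSeq v c k - truncResidualSeq v c l ≤ c := by
  suffices ∀ n, ∀ k ≤ n, ∀ l ≤ n, truncResidualSeq v c k - truncResidualSeq v c l ≤ c from
    this (max k l) k (le_max_left _ _) l (le_max_right _ _)
  intro n
  induction n with
  | zero => intro k hk l hl; simp [Nat.le_zero.mp hk, Nat.le_zero.mp hl, hc]
  | succ n ih =>
    have hosc : ∀ p < n + 1, ∀ q < n + 1, truncResidualSeq v c p - truncResidualSeq v c q ≤ c :=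
      fun p hp q hq => ih p (by omega) q (by omega)
    intro k hk l hl
    rcases hk.lt_or_eq with hk | rfl
    · rcases hl.lt_or_eq with hl | rfl
      · exact ih k (by omega) l (by omega)
      obtain ⟨m, hkm, hm, heq, hle⟩ := exists_upTruncVarSeq_eq_le_truncResidualSeq hk.le hosc
      linarith [truncResidualSeq_sub_le_of_upTruncVarSeq_eq hc hm heq]
    · obtain ⟨m, hlm, hm, heq, hle⟩ := exists_downTruncVarSeq_eq_truncResidualSeq_le hl hosc
      linarith [truncResidualSeq_sub_le_of_downTruncVarSeq_eq hc hm heq]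

theorem upTruncVarSeq_add_downTruncVarSeq_le_of_eq_add (hc : 0 ≤ c) {j k : ℕ} (hjk : j < k)
    (hU : upTruncVarSeq v c k = upTruncVarSeq v c j + (v k - v j - c))
    (ih : ∀ m < k, upTruncVarSeq v c m + downTruncVarSeq v c m ≤ truncVarSeq v c m) :
    upTruncVarSeq v c k + downTruncVarSeq v c k ≤ truncVarSeq v c k := by
  obtain ⟨m, hjm, hmk, hWm, hRm⟩ : ∃ m, j ≤ m ∧ m < k ∧
      downTruncVarSeq v c m = downTruncVarSeq v c k ∧
      truncResidualSeq v c m ≤ truncResidualSeq v c j := by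
    obtain ⟨m, hjm, hmk, hWm, hRm⟩ := exists_downTruncVarSeq_eq_truncResidualSeq_le hjk.le
      fun p _ q _ => truncResidualSeq_sub_le hc v p q
    rcases hmk.lt_or_eq with hmk | rfl
    · exact ⟨m, hjm, hmk, hWm, hRm⟩
    · refine ⟨j, le_rfl, hjk, le_antisymm (downTruncVarSeq_mono hjk.le) ?_, le_rfl⟩
      simp only [truncResidualSeq] at hRm
      linarith
  -- `truncResidualSeq v c m ≤ truncResidualSeq v c j` gives `U j + (v m - v j) ≤ U m`, so the
  -- jump from `v j` to `v k` can be attached to an optimal chain for `TV^c` ending at `m`.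
  have hT := add_le_chainSup (ρ := fun i j => max (|v j - v i| - c) 0) hmk
  change truncVarSeq v c m + max (|v k - v m| - c) 0 ≤ truncVarSeq v c k at hT
  have := le_max_left (|v k - v m| - c) 0
  have := le_abs_self (v k - v m)
  have := downTruncVarSeq_mono (v := v) (c := c) hjm
  have := ih m hmk
  simp only [truncResidualSeq] at hRm
  linarith

theorem upTruncVarSeq_add_downTruncVarSeq_le (hc : 0 ≤ c) (v : ℕ → ℝ) (k : ℕ) :
    upTruncVarSeq v c k + downTruncVarSeq v c k ≤ truncVarSeq v c k := by
  induction k using Nat.strong_induction_on generalizing v with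
  | _ k ih =>
  rcases k with _ | n
  · simp [upTruncVarSeq, downTruncVarSeq, truncVarSeq, chainSup]
  obtain ⟨j, hj, hU⟩ := exists_chainSup_succ_eq (fun i j => max (v j - v i - c) 0) n
  obtain ⟨i, hi, hW⟩ := exists_chainSup_succ_eq (fun i j => max (v i - v j - c) 0) n
  change upTruncVarSeq v c (n + 1) = upTruncVarSeq v c j + max (v (n + 1) - v j - c) 0 at hU
  change downTruncVarSeq v c (n + 1) = downTruncVarSeq v c i + max (v i - v (n + 1) - c) 0 at hW
  by_cases hup : 0 ≤ v (n + 1) - v j - c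
  · rw [max_eq_left hup] at hU
    exact upTruncVarSeq_add_downTruncVarSeq_le_of_eq_add hc hj hU fun m hm => ih m hm v
  by_cases hdown : 0 ≤ v i - v (n + 1) - c
  · rw [max_eq_left hdown] at hW
    have := upTruncVarSeq_add_downTruncVarSeq_le_of_eq_add (v := -v) hc hi
      (by simp only [upTruncVarSeq_neg, Pi.neg_apply]; linarith) fun m hm => ih m hm (-v)
    rw [upTruncVarSeq_neg, downTruncVarSeq_neg, truncVarSeq_neg] at this
    linarith
  rw [max_eq_right (not_le.mp hup).le] at hU
  rw [max_eq_right (not_le.mp hdown).le] at hW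
  linarith [upTruncVarSeq_mono (v := v) (c := c) (Nat.lt_succ_iff.mp hj),
    downTruncVarSeq_mono (v := v) (c := c) (Nat.lt_succ_iff.mp hi),
    truncVarSeq_mono (v := v) (c := c) n.le_succ, ih n n.lt_succ_self v]

end seq

def IsPartition (a b : ℝ) (n : ℕ) (t : ℕ → ℝ) : Prop :=
  a ≤ t 0 ∧ (∀ i < n, t i < t (i + 1)) ∧ t n ≤ b

noncomputable def varSup (φ : ℝ → ℝ → ℝ) (a b : ℝ) : ℝ≥0∞ :=
  ⨆ (n : ℕ) (t : ℕ → ℝ) (_ : a ≤ t 0) (_ : ∀ i < n, t i < t (i + 1)) (_ : t n ≤ b),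
    ∑ i ∈ Finset.range n, ENNReal.ofReal (φ (t i) (t (i + 1)))

section varSup

variable {φ ψ : ℝ → ℝ → ℝ} {a b x y : ℝ} {n : ℕ} {t : ℕ → ℝ}

theorem IsPartition.mem_Icc (ht : IsPartition a b n t) {i : ℕ} (hi : i ≤ n) : t i ∈ Icc a b := by
  have hmono : MonotoneOn t (Set.Iic n) :=
    (strictMonoOn_Iic_of_lt_succ fun m hm => ht.2.1 m hm).monotoneOn
  exact ⟨ht.1.trans (hmono (Nat.zero_le n) hi (Nat.zero_le i)),
    (hmono hi (Set.mem_Iic.mpr le_rfl) hi).trans ht.2.2⟩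

theorem IsPartition.image_subset (ht : IsPartition a b n t) : t '' Set.Iic n ⊆ Icc a b := by
  rintro _ ⟨i, hi, rfl⟩
  exact ht.mem_Icc hi

theorem le_varSup (ht : IsPartition a b n t) :
    ∑ i ∈ Finset.range n, ENNReal.ofReal (φ (t i) (t (i + 1))) ≤ varSup φ a b :=
  le_iSup_of_le n <| le_iSup_of_le t <| le_iSup_of_le ht.1 <| le_iSup_of_le ht.2.1 <|
    le_iSup_of_le ht.2.2 le_rfl

theorem varSup_le {M : ℝ≥0∞}
    (h : ∀ n t, IsPartition a b n t →
      ∑ i ∈ Finset.range n, ENNReal.ofReal (φ (t i) (t (i + 1))) ≤ M) :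
    varSup φ a b ≤ M :=
  iSup_le fun n => iSup_le fun t => iSup_le fun h0 => iSup_le fun h1 => iSup_le fun h2 =>
    h n t ⟨h0, h1, h2⟩

theorem varSup_mono {b' : ℝ} (hb : b ≤ b') (h : ∀ s ∈ Icc a b, ∀ u ∈ Icc a b, φ s u ≤ ψ s u) :
    varSup φ a b ≤ varSup ψ a b' :=
  varSup_le fun _ _ ht =>
    (Finset.sum_le_sum fun _ hi => ENNReal.ofReal_le_ofReal <|
      h _ (ht.mem_Icc (Finset.mem_range.mp hi).le) _ (ht.mem_Icc (Finset.mem_range.mp hi))).trans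
    (le_varSup ⟨ht.1, ht.2.1, ht.2.2.trans hb⟩)

theorem sum_le_toReal_varSup (hφ : ∀ s u, 0 ≤ φ s u) (hfin : varSup φ a b ≠ ⊤)
    (ht : IsPartition a b n t) :
    ∑ i ∈ Finset.range n, φ (t i) (t (i + 1)) ≤ (varSup φ a b).toReal := by
  rw [← ENNReal.toReal_ofReal (Finset.sum_nonneg fun _ _ => hφ _ _),
    ENNReal.ofReal_sum_of_nonneg fun _ _ => hφ _ _]
  exact ENNReal.toReal_mono hfin (le_varSup ht)

theorem toReal_varSup_le (hφ : ∀ s u, 0 ≤ φ s u) (hab : a ≤ b) {K : ℝ}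
    (h : ∀ n t, IsPartition a b n t → ∑ i ∈ Finset.range n, φ (t i) (t (i + 1)) ≤ K) :
    (varSup φ a b).toReal ≤ K := by
  have hK : 0 ≤ K := by simpa using h 0 (fun _ => a) ⟨le_rfl, by simp, hab⟩
  refine ENNReal.toReal_le_of_le_ofReal hK (varSup_le fun n t ht => ?_)
  rw [← ENNReal.ofReal_sum_of_nonneg fun _ _ => hφ _ _]
  exact ENNReal.ofReal_le_ofReal (h n t ht)

theorem toReal_varSup_add_toReal_varSup_le (hφ : ∀ s u, 0 ≤ φ s u) (hψ : ∀ s u, 0 ≤ ψ s u)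
    (hx : a ≤ x) (hy : a ≤ y) {K : ℝ}
    (h : ∀ n t n' t', IsPartition a x n t → IsPartition a y n' t' →
      ∑ i ∈ Finset.range n, φ (t i) (t (i + 1)) +
        ∑ i ∈ Finset.range n', ψ (t' i) (t' (i + 1)) ≤ K) :
    (varSup φ a x).toReal + (varSup ψ a y).toReal ≤ K := by
  have hφK : ∀ n' t', IsPartition a y n' t' →
      (varSup φ a x).toReal ≤ K - ∑ i ∈ Finset.range n', ψ (t' i) (t' (i + 1)) :=
    fun n' t' ht' => toReal_varSup_le hφ hx fun n t ht => by linarith [h n t n' t' ht ht']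
  linarith [toReal_varSup_le (K := K - (varSup φ a x).toReal) hψ hy fun n' t' ht' => by
    linarith [hφK n' t' ht']]

theorem IsPartition.le (ht : IsPartition a b n t) : a ≤ b :=
  (ht.mem_Icc (Nat.zero_le n)).1.trans (ht.mem_Icc (Nat.zero_le n)).2

theorem IsPartition.sum_abs_sub_le {A B : ℝ → ℝ} (ht : IsPartition a b n t)
    (hA : MonotoneOn A (Icc a b)) (hB : MonotoneOn B (Icc a b)) :
    ∑ i ∈ Finset.range n, |A (t (i + 1)) - B (t (i + 1)) - (A (t i) - B (t i))| ≤
      A b - A a + (B b - B a) := by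
  have hab := ht.le
  have hstep : ∀ i ∈ Finset.range n, |A (t (i + 1)) - B (t (i + 1)) - (A (t i) - B (t i))| ≤
      A (t (i + 1)) - A (t i) + (B (t (i + 1)) - B (t i)) := fun i hi => by
    have hi := Finset.mem_range.mp hi
    have := hA (ht.mem_Icc hi.le) (ht.mem_Icc hi) (ht.2.1 i hi).le
    have := hB (ht.mem_Icc hi.le) (ht.mem_Icc hi) (ht.2.1 i hi).le
    exact abs_le.mpr ⟨by linarith, by linarith⟩
  calc _ ≤ _ := Finset.sum_le_sum hstep
    _ = A (t n) - A (t 0) + (B (t n) - B (t 0)) := by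
      rw [Finset.sum_add_distrib, Finset.sum_range_sub (fun i => A (t i)),
        Finset.sum_range_sub (fun i => B (t i))]
    _ ≤ A b - A a + (B b - B a) := by
      have h0 := ht.mem_Icc (Nat.zero_le n)
      have hn := ht.mem_Icc le_rfl
      linarith [hA (left_mem_Icc.mpr hab) h0 h0.1, hA hn (right_mem_Icc.mpr hab) hn.2,
        hB (left_mem_Icc.mpr hab) h0 h0.1, hB hn (right_mem_Icc.mpr hab) hn.2]

end varSup

theorem Set.Finite.exists_strictMono_subset_range {α : Type*} [LinearOrder α] [NoMaxOrder α]
    {S : Set α} (hS : S.Finite) (hne : S.Nonempty) :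
    ∃ s : ℕ → α, StrictMono s ∧ S ⊆ Set.range s ∧ s 0 ∈ S := by
  set F := hS.toFinset
  have hF : F.Nonempty := hS.toFinset_nonempty.mpr hne
  set e := F.orderEmbOfFin rfl
  obtain ⟨m, hm⟩ := exists_gt (F.max' hF)
  obtain ⟨g, hg, hg0⟩ := Nat.exists_strictMono' m
  have he : ∀ i, e i < m := fun i => (F.le_max' _ (F.orderEmbOfFin_mem rfl i)).trans_lt hm
  let s : ℕ → α := fun i => if h : i < F.card then e ⟨i, h⟩ else g (i - F.card)
  refine ⟨s, strictMono_nat_of_lt_succ fun i => ?_, fun x hx => ?_, ?_⟩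
  · by_cases h1 : i + 1 < F.card
    · simp only [s, dif_pos h1, dif_pos (i.lt_succ_self.trans h1)]
      exact e.strictMono (Fin.mk_lt_mk.mpr i.lt_succ_self)
    by_cases h0 : i < F.card
    · simp only [s, dif_pos h0, dif_neg h1, show i + 1 - F.card = 0 by omega, hg0]
      exact he _
    · simp only [s, dif_neg h0, dif_neg h1]
      exact hg (by omega)
  · rw [← hS.coe_toFinset, ← F.range_orderEmbOfFin rfl] at hx
    obtain ⟨i, rfl⟩ := hx
    exact ⟨i, dif_pos i.isLt⟩
  · have h0 : 0 < F.card := hF.card_pos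
    simp only [s, dif_pos h0]
    exact hS.mem_toFinset.mp (F.orderEmbOfFin_mem rfl _)

section bridge

variable {φ : ℝ → ℝ → ℝ} {a : ℝ} {s : ℕ → ℝ}

theorem chainSup_le_toReal_varSup (hφ : ∀ s u, 0 ≤ φ s u) (hs : StrictMono s) (ha : a ≤ s 0)
    {k : ℕ} (hfin : varSup φ a (s k) ≠ ⊤) :
    chainSup (fun i j => φ (s i) (s j)) k ≤ (varSup φ a (s k)).toReal := by
  obtain ⟨m, i, hi, rfl, hsum⟩ := exists_chain_sum_eq_chainSup (fun i j => φ (s i) (s j)) k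
  rw [← hsum]
  exact sum_le_toReal_varSup hφ hfin
    ⟨ha.trans (hs.monotone (Nat.zero_le _)), fun l hl => hs (hi l hl), le_rfl⟩

theorem sum_le_chainSup_of_subset_range (hφ : ∀ s u, 0 ≤ φ s u) (hs : StrictMono s) {k n : ℕ}
    {t : ℕ → ℝ} (ht : IsPartition a (s k) n t) (hts : ∀ i ≤ n, t i ∈ range s) :
    ∑ i ∈ Finset.range n, φ (t i) (t (i + 1)) ≤ chainSup (fun i j => φ (s i) (s j)) k := by
  choose! idx hidx using hts
  have hidx_mono : ∀ l < n, idx l < idx (l + 1) := fun l hl =>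
    hs.lt_iff_lt.mp (by rw [hidx l hl.le, hidx (l + 1) hl]; exact ht.2.1 l hl)
  calc ∑ i ∈ Finset.range n, φ (t i) (t (i + 1))
      = ∑ i ∈ Finset.range n, φ (s (idx i)) (s (idx (i + 1))) :=
        Finset.sum_congr rfl fun i hi => by
          rw [hidx i (Finset.mem_range.mp hi).le, hidx (i + 1) (Finset.mem_range.mp hi)]
    _ ≤ chainSup (fun i j => φ (s i) (s j)) (idx n) :=
        sum_le_chainSup (ρ := fun i j => φ (s i) (s j)) (fun _ _ => hφ _ _) hidx_mono
    _ ≤ chainSup (fun i j => φ (s i) (s j)) k :=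
        chainSup_mono (fun _ _ => hφ _ _) (hs.le_iff_le.mp (by rw [hidx n le_rfl]; exact ht.2.2))

theorem exists_strictMono_of_isPartition {x y : ℝ} {n n' : ℕ} {t t' : ℕ → ℝ}
    (ht : IsPartition a x n t) (ht' : IsPartition a y n' t') (hx : a ≤ x) (hy : a ≤ y) :
    ∃ s : ℕ → ℝ, StrictMono s ∧ a ≤ s 0 ∧ x ∈ range s ∧ y ∈ range s ∧
      (∀ i ≤ n, t i ∈ range s) ∧ ∀ i ≤ n', t' i ∈ range s := by
  set S := t '' Set.Iic n ∪ t' '' Set.Iic n' ∪ {x, y}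
  have hS : S.Finite := (((Set.finite_Iic n).image t).union ((Set.finite_Iic n').image t')).union
    (by simp)
  have hSa : S ⊆ Ici a := union_subset (union_subset
    (ht.image_subset.trans Icc_subset_Ici_self) (ht'.image_subset.trans Icc_subset_Ici_self))
    (insert_subset hx (singleton_subset_iff.mpr hy))
  obtain ⟨s, hs, hSs, hs0⟩ := hS.exists_strictMono_subset_range ⟨x, by simp [S]⟩
  exact ⟨s, hs, hSa hs0, hSs (by simp [S]), hSs (by simp [S]),
    fun i hi => hSs (by simp only [S]; exact Or.inl (Or.inl ⟨i, hi, rfl⟩)),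
    fun i hi => hSs (by simp only [S]; exact Or.inl (Or.inr ⟨i, hi, rfl⟩))⟩

end bridge

section truncVar

variable {a b c : ℝ}

theorem truncVar_eq_varSup (f : ℝ → ℝ) (a b c : ℝ) :
    truncVar f a b c = varSup (fun s u => max (|f u - f s| - c) 0) a b := rfl

theorem upTruncVar_eq_varSup (f : ℝ → ℝ) (a b c : ℝ) :
    upTruncVar f a b c = varSup (fun s u => max (f u - f s - c) 0) a b := rfl

theorem downTruncVar_eq_varSup (f : ℝ → ℝ) (a b c : ℝ) :
    downTruncVar f a b c = varSup (fun s u => max (f s - f u - c) 0) a b := rfl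

theorem truncVar_le_totalVar_add (f h : ℝ → ℝ)
    (hh : ∀ s ∈ Icc a b, ∀ u ∈ Icc a b, |h s - h u| ≤ c) :
    truncVar f a b c ≤ totalVar (fun s => f s + h s) a b := by
  rw [totalVar, truncVar_eq_varSup, truncVar_eq_varSup]
  refine varSup_mono le_rfl fun s hs u hu => max_le_max ?_ le_rfl
  have := abs_sub (f u + h u - (f s + h s)) (h u - h s)
  rw [show f u + h u - (f s + h s) - (h u - h s) = f u - f s by ring] at this
  linarith [hh u hu s hs]

theorem upTruncVar_le_truncVar (f : ℝ → ℝ) {b' : ℝ} (hb : b ≤ b') :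
    upTruncVar f a b c ≤ truncVar f a b' c := by
  rw [upTruncVar_eq_varSup, truncVar_eq_varSup]
  exact varSup_mono hb fun s _ u _ => max_le_max (by linarith [le_abs_self (f u - f s)]) le_rfl

theorem downTruncVar_le_truncVar (f : ℝ → ℝ) {b' : ℝ} (hb : b ≤ b') :
    downTruncVar f a b c ≤ truncVar f a b' c := by
  rw [downTruncVar_eq_varSup, truncVar_eq_varSup]
  exact varSup_mono hb fun s _ u _ => max_le_max (by linarith [neg_abs_le (f u - f s)]) le_rfl

theorem upTruncVar_mono (f : ℝ → ℝ) {b' : ℝ} (hb : b ≤ b') :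
    upTruncVar f a b c ≤ upTruncVar f a b' c := by
  rw [upTruncVar_eq_varSup, upTruncVar_eq_varSup]
  exact varSup_mono hb fun _ _ _ _ => le_rfl

theorem downTruncVar_mono (f : ℝ → ℝ) {b' : ℝ} (hb : b ≤ b') :
    downTruncVar f a b c ≤ downTruncVar f a b' c := by
  rw [downTruncVar_eq_varSup, downTruncVar_eq_varSup]
  exact varSup_mono hb fun _ _ _ _ => le_rfl

theorem toReal_upTruncVar_add_toReal_downTruncVar_le (hc : 0 ≤ c) (f : ℝ → ℝ) (hab : a ≤ b)
    (hfin : truncVar f a b c ≠ ⊤) :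
    (upTruncVar f a b c).toReal + (downTruncVar f a b c).toReal ≤ (truncVar f a b c).toReal := by
  have hU : ∀ s u, 0 ≤ max (f u - f s - c) 0 := fun _ _ => le_max_right _ _
  have hW : ∀ s u, 0 ≤ max (f s - f u - c) 0 := fun _ _ => le_max_right _ _
  have hT : ∀ s u, 0 ≤ max (|f u - f s| - c) 0 := fun _ _ => le_max_right _ _
  rw [upTruncVar_eq_varSup, downTruncVar_eq_varSup, truncVar_eq_varSup] at *
  refine toReal_varSup_add_toReal_varSup_le hU hW hab hab fun n t n' t' ht ht' => ?_
  obtain ⟨s, hs, hs0, ⟨k, rfl⟩, -, hts, hts'⟩ := exists_strictMono_of_isPartition ht ht' hab hab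
  calc _ ≤ upTruncVarSeq (fun i => f (s i)) c k + downTruncVarSeq (fun i => f (s i)) c k :=
        add_le_add (sum_le_chainSup_of_subset_range hU hs ht hts)
          (sum_le_chainSup_of_subset_range hW hs ht' hts')
    _ ≤ truncVarSeq (fun i => f (s i)) c k := upTruncVarSeq_add_downTruncVarSeq_le hc _ k
    _ ≤ _ := chainSup_le_toReal_varSup hT hs hs0 hfin

noncomputable def truncResidual (f : ℝ → ℝ) (a c s : ℝ) : ℝ :=
  f s - (upTruncVar f a s c).toReal + (downTruncVar f a s c).toReal

theorem truncResidual_sub_le (hc : 0 ≤ c) (f : ℝ → ℝ) {x y : ℝ} (hx : a ≤ x) (hy : a ≤ y)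
    (hUy : upTruncVar f a y c ≠ ⊤) (hWx : downTruncVar f a x c ≠ ⊤) :
    truncResidual f a c y - truncResidual f a c x ≤ c := by
  suffices (downTruncVar f a y c).toReal + (upTruncVar f a x c).toReal ≤
      c + (upTruncVar f a y c).toReal + (downTruncVar f a x c).toReal + f x - f y by
    rw [truncResidual, truncResidual]
    linarith
  have hU : ∀ s u, 0 ≤ max (f u - f s - c) 0 := fun _ _ => le_max_right _ _
  have hW : ∀ s u, 0 ≤ max (f s - f u - c) 0 := fun _ _ => le_max_right _ _
  simp only [upTruncVar_eq_varSup, downTruncVar_eq_varSup] at *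
  refine toReal_varSup_add_toReal_varSup_le hW hU hy hx fun n t n' t' ht ht' => ?_
  obtain ⟨s, hs, hs0, ⟨ky, rfl⟩, ⟨kx, rfl⟩, hts, hts'⟩ :=
    exists_strictMono_of_isPartition ht ht' hy hx
  have hWy := sum_le_chainSup_of_subset_range hW hs ht hts
  have hUx := sum_le_chainSup_of_subset_range hU hs ht' hts'
  have hUy' := chainSup_le_toReal_varSup hU hs hs0 hUy
  have hWx' := chainSup_le_toReal_varSup hW hs hs0 hWx
  have hres := truncResidualSeq_sub_le hc (fun i => f (s i)) ky kx
  simp only [truncResidualSeq, upTruncVarSeq, downTruncVarSeq] at hres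
  linarith

theorem abs_truncResidual_sub_le (hc : 0 ≤ c) (f : ℝ → ℝ) (hfin : truncVar f a b c ≠ ⊤)
    {x y : ℝ} (hx : x ∈ Icc a b) (hy : y ∈ Icc a b) :
    |truncResidual f a c x - truncResidual f a c y| ≤ c := by
  have hUfin : ∀ s ∈ Icc a b, upTruncVar f a s c ≠ ⊤ := fun s hs =>
    ne_top_of_le_ne_top hfin (upTruncVar_le_truncVar f hs.2)
  have hWfin : ∀ s ∈ Icc a b, downTruncVar f a s c ≠ ⊤ := fun s hs =>
    ne_top_of_le_ne_top hfin (downTruncVar_le_truncVar f hs.2)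
  exact abs_sub_le_iff.mpr
    ⟨truncResidual_sub_le hc f hy.1 hx.1 (hUfin x hx) (hWfin y hy),
      truncResidual_sub_le hc f hx.1 hy.1 (hUfin y hy) (hWfin x hx)⟩

theorem totalVar_sub_truncResidual_le (hc : 0 ≤ c) (f : ℝ → ℝ) (hfin : truncVar f a b c ≠ ⊤) :
    totalVar (fun s => f s - truncResidual f a c s) a b ≤ truncVar f a b c := by
  set U : ℝ → ℝ := fun s => (upTruncVar f a s c).toReal with hU
  set W : ℝ → ℝ := fun s => (downTruncVar f a s c).toReal with hW
  have hUmono : MonotoneOn U (Icc a b) := fun _ _ u hu hsu =>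
    ENNReal.toReal_mono (ne_top_of_le_ne_top hfin (upTruncVar_le_truncVar f hu.2))
      (upTruncVar_mono f hsu)
  have hWmono : MonotoneOn W (Icc a b) := fun _ _ u hu hsu =>
    ENNReal.toReal_mono (ne_top_of_le_ne_top hfin (downTruncVar_le_truncVar f hu.2))
      (downTruncVar_mono f hsu)
  rw [totalVar, truncVar_eq_varSup, truncVar_eq_varSup]
  refine varSup_le fun n t ht => ?_
  rw [← ENNReal.ofReal_sum_of_nonneg fun _ _ => le_max_right _ _]
  refine ENNReal.ofReal_le_of_le_toReal ?_
  calc _ = ∑ i ∈ Finset.range n, |U (t (i + 1)) - W (t (i + 1)) - (U (t i) - W (t i))| :=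
        Finset.sum_congr rfl fun i _ => by
          rw [sub_zero, max_eq_left (abs_nonneg _), truncResidual, truncResidual, hU, hW]
          ring_nf
    _ ≤ U b - U a + (W b - W a) := ht.sum_abs_sub_le hUmono hWmono
    _ ≤ U b + W b := by linarith [ENNReal.toReal_nonneg (a := upTruncVar f a a c),
        ENNReal.toReal_nonneg (a := downTruncVar f a a c)]
    _ ≤ (truncVar f a b c).toReal :=
        toReal_upTruncVar_add_toReal_downTruncVar_le hc f ht.le hfin

theorem exists_totalVar_add_eq_truncVar (hc : 0 ≤ c) (f : ℝ → ℝ) :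
    ∃ h : ℝ → ℝ, (∀ s ∈ Icc a b, ∀ u ∈ Icc a b, |h s - h u| ≤ c) ∧
      totalVar (fun s => f s + h s) a b = truncVar f a b c := by
  by_cases hfin : truncVar f a b c = ⊤
  · have hosc : ∀ s ∈ Icc a b, ∀ u ∈ Icc a b, |(0 : ℝ → ℝ) s - (0 : ℝ → ℝ) u| ≤ c :=
      fun _ _ _ _ => by simpa using hc
    exact ⟨0, hosc, hfin ▸ top_unique (hfin ▸ truncVar_le_totalVar_add f 0 hosc)⟩
  have hosc : ∀ s ∈ Icc a b, ∀ u ∈ Icc a b,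
      |-truncResidual f a c s - -truncResidual f a c u| ≤ c := fun s hs u hu => by
    rw [neg_sub_neg, abs_sub_comm]
    exact abs_truncResidual_sub_le hc f hfin hs hu
  refine ⟨fun s => -truncResidual f a c s, hosc, le_antisymm ?_ (truncVar_le_totalVar_add f _ hosc)⟩
  simpa only [← sub_eq_add_neg] using totalVar_sub_truncResidual_le hc f hfin

end truncVar

theorem inf_totalVar_osc_ball_eq_truncVar_general
    (a b c : ℝ) (hc : 0 < c) (f : ℝ → ℝ) :
    sInf {v : ℝ≥0∞ | ∃ h : ℝ → ℝ,
        (∀ s ∈ Set.Icc a b, ∀ u ∈ Set.Icc a b, |h s - h u| ≤ c) ∧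
        v = totalVar (fun s => f s + h s) a b} = truncVar f a b c ∧
    ∃ h : ℝ → ℝ, (∀ s ∈ Set.Icc a b, ∀ u ∈ Set.Icc a b, |h s - h u| ≤ c) ∧
        totalVar (fun s => f s + h s) a b = truncVar f a b c := by
  obtain ⟨h, hosc, heq⟩ := exists_totalVar_add_eq_truncVar (a := a) (b := b) hc.le f
  refine ⟨le_antisymm (sInf_le ⟨h, hosc, heq.symm⟩) (le_sInf ?_), h, hosc, heq⟩
  rintro _ ⟨h', hosc', rfl⟩
  exact truncVar_le_totalVar_add f h' hosc'

/-- The infimum of total variations over perturbations `h` with oscillation at most `c`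
equals the truncated variation `TV^c(f,[a,b])`, and the infimum is attained. -/
theorem inf_totalVar_osc_ball_eq_truncVar
    (a b c : ℝ) (hab : a < b) (hc : 0 < c) (f : ℝ → ℝ) (hf : CadlagOn f a b) :
    sInf {v : ℝ≥0∞ | ∃ h : ℝ → ℝ,
        (∀ s ∈ Set.Icc a b, ∀ u ∈ Set.Icc a b, |h s - h u| ≤ c) ∧
        v = totalVar (fun s => f s + h s) a b} = truncVar f a b c ∧
    ∃ h : ℝ → ℝ, (∀ s ∈ Set.Icc a b, ∀ u ∈ Set.Icc a b, |h s - h u| ≤ c) ∧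
        totalVar (fun s => f s + h s) a b = truncVar f a b c :=
  inf_totalVar_osc_ball_eq_truncVar_general a b c hc f
end

section
/- Let a < b, let f : [a,b] → ℝ be càdlàg on [a,b], and let c > 0. Suppose g : [a,b] → ℝ satisfies g(a) = 0, |(g(s) − g(u)) − (f(s) − f(u))| ≤ c for all a ≤ u < s ≤ b, TV(g,[a,b]) < ∞, and TV(g,[a,s]) ≤ TV^c(f,[a,s]) for every s ∈ (a,b]. Then g(s) = UTV^c(f,[a,s]) − DTV^c(f,[a,s]) for every s ∈ (a,b]. -/
open Set Filter Topology ENNReal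

namespace TVUniq

def IsPart (a s : ℝ) (n : ℕ) (t : ℕ → ℝ) : Prop :=
  a ≤ t 0 ∧ (∀ i < n, t i < t (i + 1)) ∧ t n ≤ s

noncomputable def rsum (F : ℝ → ℝ → ℝ) (n : ℕ) (t : ℕ → ℝ) : ℝ :=
  ∑ i ∈ Finset.range n, max (F (t i) (t (i + 1))) 0

noncomputable def pSup (F : ℝ → ℝ → ℝ) (a s : ℝ) : ℝ≥0∞ :=
  ⨆ (n : ℕ) (t : ℕ → ℝ) (_ : a ≤ t 0) (_ : ∀ i < n, t i < t (i + 1)) (_ : t n ≤ s),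
    ∑ i ∈ Finset.range n, ENNReal.ofReal (max (F (t i) (t (i + 1))) 0)

lemma chain_mono {α : Type*} [Preorder α] {t : ℕ → α} {n : ℕ}
    (h : ∀ i < n, t i < t (i + 1)) : ∀ {i j : ℕ}, i ≤ j → j ≤ n → t i ≤ t j := by
  intro i j hij hjn
  induction j, hij using Nat.le_induction with
  | base => exact le_rfl
  | succ j hij ih => exact le_trans (ih (by omega)) (le_of_lt (h j (by omega)))

lemma IsPart.mem {a s : ℝ} {n : ℕ} {t : ℕ → ℝ} (h : IsPart a s n t) {i : ℕ} (hi : i ≤ n) :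
    t i ∈ Set.Icc a s :=
  ⟨le_trans h.1 (chain_mono h.2.1 (Nat.zero_le i) hi),
   le_trans (chain_mono h.2.1 hi le_rfl) h.2.2⟩

lemma rsum_nonneg (F : ℝ → ℝ → ℝ) (n : ℕ) (t : ℕ → ℝ) : 0 ≤ rsum F n t :=
  Finset.sum_nonneg fun _ _ => le_max_right _ _

lemma sum_le_pSup (F : ℝ → ℝ → ℝ) {a s : ℝ} {n : ℕ} {t : ℕ → ℝ} (h : IsPart a s n t) :
    ∑ i ∈ Finset.range n, ENNReal.ofReal (max (F (t i) (t (i + 1))) 0) ≤ pSup F a s :=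
  le_iSup_of_le n (le_iSup_of_le t (le_iSup_of_le h.1 (le_iSup_of_le h.2.1
    (le_iSup_of_le h.2.2 le_rfl))))

lemma ofReal_rsum_le (F : ℝ → ℝ → ℝ) {a s : ℝ} {n : ℕ} {t : ℕ → ℝ} (h : IsPart a s n t) :
    ENNReal.ofReal (rsum F n t) ≤ pSup F a s := by
  rw [rsum, ENNReal.ofReal_sum_of_nonneg (fun i _ => le_max_right _ _)]
  exact sum_le_pSup F h

lemma pSup_le_iff {F : ℝ → ℝ → ℝ} {a s : ℝ} {X : ℝ≥0∞} :
    pSup F a s ≤ X ↔ ∀ n t, IsPart a s n t →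
      (∑ i ∈ Finset.range n, ENNReal.ofReal (max (F (t i) (t (i + 1))) 0)) ≤ X := by
  constructor
  · intro h n t ht
    exact le_trans (sum_le_pSup F ht) h
  · intro h
    refine iSup_le fun n => iSup_le fun t => iSup_le fun h1 => iSup_le fun h2 => iSup_le fun h3 => ?_
    exact h n t ⟨h1, h2, h3⟩

lemma pSup_mono_right {F : ℝ → ℝ → ℝ} {a s s' : ℝ} (h : s ≤ s') : pSup F a s ≤ pSup F a s' := by
  rw [pSup_le_iff]
  intro n t ht
  exact sum_le_pSup F ⟨ht.1, ht.2.1, le_trans ht.2.2 h⟩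

lemma pSup_mono {F G : ℝ → ℝ → ℝ} {a s : ℝ}
    (h : ∀ x ∈ Set.Icc a s, ∀ y ∈ Set.Icc a s, x < y → F x y ≤ G x y) :
    pSup F a s ≤ pSup G a s := by
  rw [pSup_le_iff]
  intro n t ht
  refine le_trans ?_ (sum_le_pSup G ht)
  refine Finset.sum_le_sum fun i hi => ?_
  have hin : i < n := Finset.mem_range.mp hi
  refine ENNReal.ofReal_le_ofReal (max_le_max ?_ le_rfl)
  exact h (t i) (ht.mem hin.le) (t (i + 1)) (ht.mem hin) (ht.2.1 i hin)

lemma pSup_le_add {F G H : ℝ → ℝ → ℝ} {a s : ℝ}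
    (h : ∀ x y : ℝ, max (F x y) 0 ≤ max (G x y) 0 + max (H x y) 0) :
    pSup F a s ≤ pSup G a s + pSup H a s := by
  rw [pSup_le_iff]
  intro n t ht
  calc ∑ i ∈ Finset.range n, ENNReal.ofReal (max (F (t i) (t (i + 1))) 0)
      ≤ ∑ i ∈ Finset.range n, (ENNReal.ofReal (max (G (t i) (t (i + 1))) 0)
          + ENNReal.ofReal (max (H (t i) (t (i + 1))) 0)) := by
        refine Finset.sum_le_sum fun i _ => ?_
        rw [← ENNReal.ofReal_add (le_max_right _ _) (le_max_right _ _)]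
        exact ENNReal.ofReal_le_ofReal (h _ _)
    _ = _ + _ := Finset.sum_add_distrib
    _ ≤ pSup G a s + pSup H a s := add_le_add (sum_le_pSup G ht) (sum_le_pSup H ht)

lemma exists_near (F : ℝ → ℝ → ℝ) {a s : ℝ} (has : a ≤ s) (hfin : pSup F a s ≠ ⊤)
    {ε : ℝ} (hε : 0 < ε) :
    ∃ n t, IsPart a s n t ∧ (pSup F a s).toReal - ε ≤ rsum F n t := by
  by_cases h0 : pSup F a s = 0
  · refine ⟨0, fun _ => a, ⟨le_rfl, by omega, has⟩, ?_⟩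
    have : rsum F 0 (fun _ => a) = 0 := by simp [rsum]
    rw [this, h0]
    simp [hε.le]
  · have hlt : ENNReal.ofReal ((pSup F a s).toReal - ε) < pSup F a s := by
      rcases le_or_gt ((pSup F a s).toReal - ε) 0 with h | h
      · rw [ENNReal.ofReal_eq_zero.mpr h]
        exact pos_iff_ne_zero.mpr h0
      · calc ENNReal.ofReal ((pSup F a s).toReal - ε)
            < ENNReal.ofReal ((pSup F a s).toReal) := by
              rw [ENNReal.ofReal_lt_ofReal_iff (by linarith)]; linarith
          _ = pSup F a s := ENNReal.ofReal_toReal hfin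
    rw [pSup, lt_iSup_iff] at hlt
    obtain ⟨n, hlt⟩ := hlt
    rw [lt_iSup_iff] at hlt
    obtain ⟨t, hlt⟩ := hlt
    rw [lt_iSup_iff] at hlt
    obtain ⟨h1, hlt⟩ := hlt
    rw [lt_iSup_iff] at hlt
    obtain ⟨h2, hlt⟩ := hlt
    rw [lt_iSup_iff] at hlt
    obtain ⟨h3, hlt⟩ := hlt
    refine ⟨n, t, ⟨h1, h2, h3⟩, ?_⟩
    rw [← ENNReal.ofReal_sum_of_nonneg (fun i _ => le_max_right _ _)] at hlt
    exact (ENNReal.ofReal_le_ofReal_iff (Finset.sum_nonneg fun _ _ => le_max_right _ _)).mp hlt.le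

lemma telescope {G : ℝ → ℝ → ℝ} (hG : ∀ x y z : ℝ, G x z = G x y + G y z) (v : ℕ → ℝ) :
    ∀ j k : ℕ, j ≤ k →
      max (G (v j) (v k)) 0 ≤ ∑ i ∈ Finset.Ico j k, max (G (v i) (v (i + 1))) 0 := by
  intro j k hjk
  induction k, hjk using Nat.le_induction with
  | base =>
      have h0 : G (v j) (v j) = 0 := by have := hG (v j) (v j) (v j); linarith
      simp [h0]
  | succ k hjk ih =>
      rw [Finset.sum_Ico_succ_top (by omega)]
      have hsplit : G (v j) (v (k + 1)) = G (v j) (v k) + G (v k) (v (k + 1)) := hG _ _ _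
      calc max (G (v j) (v (k + 1))) 0
          ≤ max (G (v j) (v k)) 0 + max (G (v k) (v (k + 1))) 0 := by
            rw [hsplit]
            exact max_le (add_le_add (le_max_left _ _) (le_max_left _ _))
              (add_nonneg (le_max_right _ _) (le_max_right _ _))
        _ ≤ _ := add_le_add ih le_rfl

lemma refine_le {G : ℝ → ℝ → ℝ} (hG : ∀ x y z : ℝ, G x z = G x y + G y z)
    {n k : ℕ} {t v : ℕ → ℝ} {φ : ℕ → ℕ}
    (hφ : ∀ i < n, φ i < φ (i + 1)) (hφk : φ n ≤ k) (heq : ∀ i ≤ n, v (φ i) = t i) :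
    rsum G n t ≤ rsum G k v := by
  have hmono : ∀ {i j : ℕ}, i ≤ j → j ≤ n → φ i ≤ φ j := by
    intro i j hij hjn
    induction j, hij using Nat.le_induction with
    | base => exact le_rfl
    | succ j hij ih => exact le_trans (ih (by omega)) (le_of_lt (hφ j (by omega)))
  have key : ∀ N, N ≤ n → ∑ i ∈ Finset.range N, max (G (t i) (t (i + 1))) 0
      ≤ ∑ j ∈ Finset.Ico (φ 0) (φ N), max (G (v j) (v (j + 1))) 0 := by
    intro N
    induction N with
    | zero => simp
    | succ N ih =>
        intro hN
        rw [Finset.sum_range_succ,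
          ← Finset.sum_Ico_consecutive _ (hmono (Nat.zero_le N) (by omega))
            (hmono (Nat.le_succ N) hN)]
        refine add_le_add (ih (by omega)) ?_
        rw [← heq N (by omega), ← heq (N + 1) hN]
        exact telescope hG v (φ N) (φ (N + 1)) (le_of_lt (hφ N (by omega)))
  calc rsum G n t
      ≤ ∑ j ∈ Finset.Ico (φ 0) (φ n), max (G (v j) (v (j + 1))) 0 := key n le_rfl
    _ ≤ rsum G k v := by
        refine Finset.sum_le_sum_of_subset_of_nonneg ?_ (fun _ _ _ => le_max_right _ _)
        intro j hj
        rw [Finset.mem_Ico] at hj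
        rw [Finset.mem_range]
        omega

lemma embed (S : Finset ℝ) (hK : 0 < S.card) {n : ℕ} {t : ℕ → ℝ}
    (hstrict : ∀ i < n, t i < t (i + 1)) (hmem : ∀ i ≤ n, t i ∈ S) :
    ∃ φ : ℕ → ℕ, (∀ i < n, φ i < φ (i + 1)) ∧ φ n ≤ S.card - 1 ∧
      ∀ i ≤ n, ((S.orderIsoOfFin rfl) ⟨min (φ i) (S.card - 1), by omega⟩ : ℝ) = t i := by
  set e := S.orderIsoOfFin rfl with he
  refine ⟨fun i => (e.symm ⟨t (min i n), hmem _ (min_le_right _ _)⟩ : Fin S.card).val,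
    ?_, ?_, ?_⟩
  · intro i hi
    have h1 : min i n = i := by omega
    have h2 : min (i + 1) n = i + 1 := by omega
    have hlt : t (min i n) < t (min (i + 1) n) := by rw [h1, h2]; exact hstrict i hi
    have : e.symm ⟨t (min i n), hmem _ (min_le_right _ _)⟩
        < e.symm ⟨t (min (i + 1) n), hmem _ (min_le_right _ _)⟩ := by
      rw [OrderIso.lt_iff_lt]
      exact Subtype.mk_lt_mk.mpr hlt
    exact this
  · show (e.symm ⟨t (min n n), hmem _ (min_le_right _ _)⟩ : Fin S.card).val ≤ S.card - 1
    have := (e.symm ⟨t (min n n), hmem _ (min_le_right _ _)⟩).isLt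
    omega
  · intro i hi
    have h1 : min i n = i := by omega
    have hL := (e.symm ⟨t (min i n), hmem _ (min_le_right _ _)⟩).isLt
    have h2 : min ((e.symm ⟨t (min i n), hmem _ (min_le_right _ _)⟩ : Fin S.card).val)
        (S.card - 1) = (e.symm ⟨t (min i n), hmem _ (min_le_right _ _)⟩ : Fin S.card).val := by
      omega
    have h3 : (⟨min ((e.symm ⟨t (min i n), hmem _ (min_le_right _ _)⟩ : Fin S.card).val)
        (S.card - 1), by omega⟩ : Fin S.card)
        = e.symm ⟨t (min i n), hmem _ (min_le_right _ _)⟩ := Fin.ext h2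
    rw [h3, OrderIso.apply_symm_apply]
    show t (min i n) = t i
    rw [h1]

lemma exists_merge {a s : ℝ} (has : a ≤ s) {n m : ℕ} {t u : ℕ → ℝ}
    (ht : IsPart a s n t) (hu : IsPart a s m u) :
    ∃ k : ℕ, ∃ v : ℕ → ℝ, IsPart a s k v ∧ v 0 = a ∧ v k = s ∧
      (∃ φ : ℕ → ℕ, (∀ i < n, φ i < φ (i + 1)) ∧ φ n ≤ k ∧ ∀ i ≤ n, v (φ i) = t i) ∧
      (∃ ψ : ℕ → ℕ, (∀ i < m, ψ i < ψ (i + 1)) ∧ ψ m ≤ k ∧ ∀ i ≤ m, v (ψ i) = u i) := by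
  classical
  set S : Finset ℝ := (((Finset.range (n + 1)).image t ∪ (Finset.range (m + 1)).image u)
    ∪ {a, s}) with hS
  have haS : a ∈ S := by simp [hS]
  have hsS : s ∈ S := by simp [hS]
  have htS : ∀ i ≤ n, t i ∈ S := by
    intro i hi
    simp only [hS, Finset.mem_union, Finset.mem_image, Finset.mem_range]
    exact Or.inl (Or.inl ⟨i, by omega, rfl⟩)
  have huS : ∀ i ≤ m, u i ∈ S := by
    intro i hi
    simp only [hS, Finset.mem_union, Finset.mem_image, Finset.mem_range]
    exact Or.inl (Or.inr ⟨i, by omega, rfl⟩)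
  have hmemS : ∀ x ∈ S, x ∈ Set.Icc a s := by
    intro x hx
    simp only [hS, Finset.mem_union, Finset.mem_image, Finset.mem_range,
      Finset.mem_insert, Finset.mem_singleton] at hx
    rcases hx with (⟨i, hi, rfl⟩ | ⟨i, hi, rfl⟩) | (rfl | rfl)
    · exact ht.mem (by omega)
    · exact hu.mem (by omega)
    · exact ⟨le_rfl, has⟩
    · exact ⟨has, le_rfl⟩
  have hK : 0 < S.card := Finset.card_pos.mpr ⟨a, haS⟩
  set e := S.orderIsoOfFin rfl with he
  set v : ℕ → ℝ := fun i => (e ⟨min i (S.card - 1), by omega⟩ : ℝ) with hv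
  have hvmem : ∀ i, v i ∈ S := fun i => (e _).2
  have hvIcc : ∀ i, v i ∈ Set.Icc a s := fun i => hmemS _ (hvmem i)
  have hv0 : v 0 = a := by
    refine le_antisymm ?_ (hvIcc 0).1
    obtain ⟨j, hj⟩ := e.surjective ⟨a, haS⟩
    have hle : e ⟨min 0 (S.card - 1), by omega⟩ ≤ e j := by
      apply e.monotone
      simp [Fin.le_def]
    calc v 0 ≤ ((e j : S) : ℝ) := hle
      _ = a := by rw [hj]
  have hvK : v (S.card - 1) = s := by
    refine le_antisymm (hvIcc _).2 ?_
    obtain ⟨j, hj⟩ := e.surjective ⟨s, hsS⟩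
    have hle : e j ≤ e ⟨min (S.card - 1) (S.card - 1), by omega⟩ := by
      apply e.monotone
      have := j.isLt
      simp [Fin.le_def]
      omega
    calc s = ((e j : S) : ℝ) := by rw [hj]
      _ ≤ v (S.card - 1) := hle
  have hvstrict : ∀ i < S.card - 1, v i < v (i + 1) := by
    intro i hi
    have : e ⟨min i (S.card - 1), by omega⟩ < e ⟨min (i + 1) (S.card - 1), by omega⟩ := by
      apply e.strictMono
      rw [Fin.mk_lt_mk]
      omega
    exact this
  obtain ⟨φ, hφ1, hφ2, hφ3⟩ := embed S hK ht.2.1 htS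
  obtain ⟨ψ, hψ1, hψ2, hψ3⟩ := embed S hK hu.2.1 huS
  exact ⟨S.card - 1, v, ⟨(hvIcc 0).1, hvstrict, (hvIcc _).2⟩, hv0, hvK,
    ⟨φ, hφ1, hφ2, fun i hi => hφ3 i hi⟩, ⟨ψ, hψ1, hψ2, fun i hi => hψ3 i hi⟩⟩

end TVUniq

open TVUniq in
/-- Uniqueness: any `g` starting from `0`, with increments `c`-close to those of `f`,
finite total variation, and total variation on every `[a,s]` not exceeding `TV^c(f,[a,s])`,
must equal `UTV^c(f,[a,·]) - DTV^c(f,[a,·])`. -/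
theorem eq_utv_sub_dtv_of_optimal
    (a b c : ℝ) (hab : a < b) (hc : 0 < c) (f : ℝ → ℝ) (hf : CadlagOn f a b)
    (g : ℝ → ℝ) (hga : g a = 0)
    (hincr : ∀ u ∈ Set.Icc a b, ∀ s ∈ Set.Icc a b, u < s →
      |(g s - g u) - (f s - f u)| ≤ c)
    (hfin : totalVar g a b < ⊤)
    (hopt : ∀ s ∈ Set.Ioc a b, totalVar g a s ≤ truncVar f a s c) :
    ∀ s ∈ Set.Ioc a b,
      g s = (upTruncVar f a s c).toReal - (downTruncVar f a s c).toReal := by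
  intro s hs
  obtain ⟨hlt, hsb⟩ := hs
  have has : a ≤ s := hlt.le
  have hTVs : totalVar g a s = pSup (fun x y => |g y - g x| - 0) a s := rfl
  have hTVb : totalVar g a b = pSup (fun x y => |g y - g x| - 0) a b := rfl
  have hUf : upTruncVar f a s c = pSup (fun x y => f y - f x - c) a s := rfl
  have hDf : downTruncVar f a s c = pSup (fun x y => f x - f y - c) a s := rfl
  have hCf : truncVar f a s c = pSup (fun x y => |f y - f x| - c) a s := rfl
  rw [hUf, hDf]
  set Fp : ℝ → ℝ → ℝ := fun x y => g y - g x - 0 with hFp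
  set Fn : ℝ → ℝ → ℝ := fun x y => g x - g y - 0 with hFn
  set Fa : ℝ → ℝ → ℝ := fun x y => |g y - g x| - 0 with hFa
  set Gu : ℝ → ℝ → ℝ := fun x y => f y - f x - c with hGu
  set Gd : ℝ → ℝ → ℝ := fun x y => f x - f y - c with hGd
  set Ga : ℝ → ℝ → ℝ := fun x y => |f y - f x| - c with hGa
  -- finiteness of the total variation of g on [a,s]
  have hTb : pSup Fa a b ≠ ⊤ := hTVb ▸ hfin.ne
  have hTs : pSup Fa a s ≠ ⊤ := ne_top_of_le_ne_top hTb (pSup_mono_right hsb)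
  have hPT : pSup Fp a s ≤ pSup Fa a s := by
    refine pSup_mono fun x _ y _ _ => ?_
    simp only [hFp, hFa]
    linarith [le_abs_self (g y - g x)]
  have hNT : pSup Fn a s ≤ pSup Fa a s := by
    refine pSup_mono fun x _ y _ _ => ?_
    simp only [hFn, hFa]
    linarith [neg_le_abs (g y - g x)]
  have hPfin : pSup Fp a s ≠ ⊤ := ne_top_of_le_ne_top hTs hPT
  have hNfin : pSup Fn a s ≠ ⊤ := ne_top_of_le_ne_top hTs hNT
  -- comparison of truncated variations of f with directed variations of g
  have hUP : pSup Gu a s ≤ pSup Fp a s := by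
    refine pSup_mono fun x hx y hy hxy => ?_
    have hx' : x ∈ Set.Icc a b := ⟨hx.1, hx.2.trans hsb⟩
    have hy' : y ∈ Set.Icc a b := ⟨hy.1, hy.2.trans hsb⟩
    have h := abs_le.mp (hincr x hx' y hy' hxy)
    simp only [hGu, hFp]
    linarith [h.1]
  have hDN : pSup Gd a s ≤ pSup Fn a s := by
    refine pSup_mono fun x hx y hy hxy => ?_
    have hx' : x ∈ Set.Icc a b := ⟨hx.1, hx.2.trans hsb⟩
    have hy' : y ∈ Set.Icc a b := ⟨hy.1, hy.2.trans hsb⟩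
    have h := abs_le.mp (hincr x hx' y hy' hxy)
    simp only [hGd, hFn]
    linarith [h.2]
  have hCUD : pSup Ga a s ≤ pSup Gu a s + pSup Gd a s := by
    refine pSup_le_add fun x y => ?_
    simp only [hGa, hGu, hGd]
    refine max_le ?_ (add_nonneg (le_max_right _ _) (le_max_right _ _))
    rcases le_total 0 (f y - f x) with h | h
    · rw [abs_of_nonneg h]
      linarith [le_max_left (f y - f x - c) (0 : ℝ), le_max_right (f x - f y - c) (0 : ℝ)]
    · rw [abs_of_nonpos h]
      linarith [le_max_left (f x - f y - c) (0 : ℝ), le_max_right (f y - f x - c) (0 : ℝ)]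
  have hTC : pSup Fa a s ≤ pSup Ga a s := by
    rw [← hTVs, ← hCf]
    exact hopt s ⟨hlt, hsb⟩
  set p := (pSup Fp a s).toReal with hp
  set q := (pSup Fn a s).toReal with hq
  -- the key approximation step
  have key : ∀ ε : ℝ, 0 < ε →
      p + q ≤ (pSup Fa a s).toReal + 2 * ε ∧ |g s - (p - q)| ≤ ε := by
    intro ε hε
    obtain ⟨n, t, hpt, hpt2⟩ := exists_near Fp has hPfin hε
    obtain ⟨m, u, hqu, hqu2⟩ := exists_near Fn has hNfin hε
    obtain ⟨k, v, hvpart, hv0, hvk, ⟨φ, hφ1, hφ2, hφ3⟩, ⟨ψ, hψ1, hψ2, hψ3⟩⟩ :=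
      exists_merge has hpt hqu
    have hGp : ∀ x y z : ℝ, Fp x z = Fp x y + Fp y z := by
      intro x y z; simp only [hFp]; ring
    have hGn : ∀ x y z : ℝ, Fn x z = Fn x y + Fn y z := by
      intro x y z; simp only [hFn]; ring
    have h1 : rsum Fp n t ≤ rsum Fp k v := refine_le hGp hφ1 hφ2 hφ3
    have h2 : rsum Fn m u ≤ rsum Fn k v := refine_le hGn hψ1 hψ2 hψ3
    have hdiff : rsum Fp k v - rsum Fn k v = g s := by
      rw [rsum, rsum, ← Finset.sum_sub_distrib]
      have hterm : ∀ i, max (Fp (v i) (v (i + 1))) 0 - max (Fn (v i) (v (i + 1))) 0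
          = g (v (i + 1)) - g (v i) := by
        intro i
        simp only [hFp, hFn, sub_zero]
        have h := max_zero_sub_max_neg_zero_eq_self (g (v (i + 1)) - g (v i))
        rw [neg_sub] at h
        exact h
      rw [Finset.sum_congr rfl (fun i _ => hterm i), Finset.sum_range_sub (fun i => g (v i))]
      rw [hv0, hvk, hga, sub_zero]
    have habs : rsum Fa k v = rsum Fp k v + rsum Fn k v := by
      rw [rsum, rsum, rsum, ← Finset.sum_add_distrib]
      refine Finset.sum_congr rfl fun i _ => ?_
      simp only [hFa, hFp, hFn, sub_zero]
      rw [max_eq_left (abs_nonneg _)]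
      have h := max_zero_add_max_neg_zero_eq_abs_self (g (v (i + 1)) - g (v i))
      rw [neg_sub] at h
      exact h.symm
    have hb1 : rsum Fp k v ≤ p := by
      have h := ENNReal.toReal_mono hPfin (ofReal_rsum_le Fp hvpart)
      rwa [ENNReal.toReal_ofReal (rsum_nonneg _ _ _)] at h
    have hb2 : rsum Fn k v ≤ q := by
      have h := ENNReal.toReal_mono hNfin (ofReal_rsum_le Fn hvpart)
      rwa [ENNReal.toReal_ofReal (rsum_nonneg _ _ _)] at h
    have hb3 : rsum Fa k v ≤ (pSup Fa a s).toReal := by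
      have h := ENNReal.toReal_mono hTs (ofReal_rsum_le Fa hvpart)
      rwa [ENNReal.toReal_ofReal (rsum_nonneg _ _ _)] at h
    constructor
    · linarith
    · rw [abs_le]
      constructor <;> linarith
  have hPQ : p + q ≤ (pSup Fa a s).toReal := by
    refine le_of_forall_pos_le_add fun ε hε => ?_
    have h := (key (ε / 2) (by linarith)).1
    linarith
  have hgs : g s = p - q := by
    have habs0 : |g s - (p - q)| ≤ 0 := by
      refine le_of_forall_pos_le_add fun ε hε => ?_
      have h := (key ε hε).2
      linarith
    have h0 := abs_eq_zero.mp (le_antisymm habs0 (abs_nonneg _))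
    linarith
  -- assemble the chain of inequalities
  have hUfin : pSup Gu a s ≠ ⊤ := ne_top_of_le_ne_top hPfin hUP
  have hDfin : pSup Gd a s ≠ ⊤ := ne_top_of_le_ne_top hNfin hDN
  have hUDfin : pSup Gu a s + pSup Gd a s ≠ ⊤ := ENNReal.add_ne_top.mpr ⟨hUfin, hDfin⟩
  have hCfin : pSup Ga a s ≠ ⊤ := ne_top_of_le_ne_top hUDfin hCUD
  have ru : (pSup Gu a s).toReal ≤ p := ENNReal.toReal_mono hPfin hUP
  have rd : (pSup Gd a s).toReal ≤ q := ENNReal.toReal_mono hNfin hDN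
  have rt : (pSup Fa a s).toReal ≤ (pSup Ga a s).toReal := ENNReal.toReal_mono hCfin hTC
  have rc : (pSup Ga a s).toReal ≤ (pSup Gu a s).toReal + (pSup Gd a s).toReal := by
    have h := ENNReal.toReal_mono hUDfin hCUD
    rwa [ENNReal.toReal_add hUfin hDfin] at h
  have hu_eq : (pSup Gu a s).toReal = p := by linarith
  have hd_eq : (pSup Gd a s).toReal = q := by linarith
  rw [hu_eq, hd_eq]
  exact hgs
end

section
/- Let a < b, let f : [a,b] → ℝ be càdlàg on [a,b], and let c > 0. Then TV^c(f,[a,b]) < ∞ (equivalently, the supremum defining TV^c(f,[a,b]) is finite). -/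
open Set Filter Topology ENNReal

/-!
Because `f` has one-sided limits at every point, a supremum argument over `[a, b]` yields a finite
set `S` such that `|f v - f u| < c` whenever `(u, v] ⊆ [a, b]` contains no point of `S`; comparing
with the nearest point of `S` to the left shows that `f` is bounded on `[a, b]`, say by `M`. In a
partition, an increment can exceed `c` only if its interval `(tᵢ, tᵢ₊₁]` contains a point of `S`,
and these intervals are disjoint, so `TV^c(f, [a, b]) ≤ 2 M · #S`.
-/

open scoped Finset

def SeparatesJumps (f : ℝ → ℝ) (ε a t : ℝ) (S : Finset ℝ) : Prop :=
  ∀ u v, a ≤ u → u ≤ v → v ≤ t → (∀ s ∈ S, s ∉ Ioc u v) → |f v - f u| < ε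

section SeparatesJumps

variable {f : ℝ → ℝ} {ε a t t' : ℝ} {S : Finset ℝ}

lemma separatesJumps_self (hε : 0 < ε) : SeparatesJumps f ε a a ∅ := by
  intro u v hu huv hv _
  rw [le_antisymm huv (hv.trans hu), sub_self, abs_zero]
  exact hε

lemma SeparatesJumps.extend (hε : 0 < ε) (hS : SeparatesJumps f ε a t S)
    (hosc : ∀ u ∈ Ico t t', ∀ v ∈ Ico t t', |f v - f u| < ε) :
    SeparatesJumps f ε a t' (insert t (insert t' S)) := by
  intro u v hu huv hv hfree
  rcases le_or_gt v t with hvt | htv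
  · exact hS u v hu huv hvt fun s hs => hfree s (by simp [hs])
  have htu : t ≤ u := not_lt.mp fun hut => hfree t (by simp) ⟨hut, htv.le⟩
  rcases hv.lt_or_eq with hvt' | rfl
  · exact hosc u ⟨htu, huv.trans_lt hvt'⟩ v ⟨htv.le, hvt'⟩
  · have hvu : v ≤ u := not_lt.mp fun huv' => hfree v (by simp) ⟨huv', le_rfl⟩
    rw [le_antisymm hvu huv, sub_self, abs_zero]
    exact hε

end SeparatesJumps

lemma Filter.Tendsto.exists_mem_abs_sub_lt {α : Type*} {l : Filter α} {g : α → ℝ} {L ε : ℝ}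
    (h : Tendsto g l (𝓝 L)) (hε : 0 < ε) : ∃ s ∈ l, ∀ u ∈ s, ∀ v ∈ s, |g v - g u| < ε := by
  refine ⟨g ⁻¹' Metric.ball L (ε / 2), h (Metric.ball_mem_nhds L (half_pos hε)), ?_⟩
  intro u hu v hv
  rw [← Real.dist_eq]
  calc dist (g v) (g u) ≤ dist (g v) L + dist (g u) L := dist_triangle_right _ _ _
    _ < ε / 2 + ε / 2 := add_lt_add hv hu
    _ = ε := add_halves ε

namespace CadlagOn

variable {f : ℝ → ℝ} {a b ε x : ℝ}

lemma exists_oscillation_lt_left (hf : CadlagOn f a b) (hε : 0 < ε) (hx : x ∈ Ioc a b) :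
    ∃ l < x, ∀ u ∈ Ioo l x, ∀ v ∈ Ioo l x, |f v - f u| < ε := by
  obtain ⟨L, hL⟩ := hf.2 x hx
  obtain ⟨s, hs, hosc⟩ := hL.exists_mem_abs_sub_lt hε
  obtain ⟨l, hl, hls⟩ := mem_nhdsLT_iff_exists_Ioo_subset.mp hs
  exact ⟨l, hl, fun u hu v hv => hosc u (hls hu) v (hls hv)⟩

lemma exists_oscillation_lt_right (hf : CadlagOn f a b) (hε : 0 < ε) (hx : x ∈ Ico a b) :
    ∃ r > x, ∀ u ∈ Ico x r, ∀ v ∈ Ico x r, |f v - f u| < ε := by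
  have hcont : Tendsto f (𝓝[≥] x) (𝓝 (f x)) := continuousWithinAt_Ioi_iff_Ici.mp (hf.1 x hx)
  obtain ⟨s, hs, hosc⟩ := hcont.exists_mem_abs_sub_lt hε
  obtain ⟨r, hr, hrs⟩ := mem_nhdsGE_iff_exists_Ico_subset.mp hs
  exact ⟨r, hr, fun u hu v hv => hosc u (hrs hu) v (hrs hv)⟩

lemma exists_separatesJumps (hf : CadlagOn f a b) (hab : a ≤ b) (hε : 0 < ε) :
    ∃ S, SeparatesJumps f ε a b S := by
  set T := {t ∈ Icc a b | ∃ S, SeparatesJumps f ε a t S}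
  have haT : a ∈ T := ⟨⟨le_rfl, hab⟩, ∅, separatesJumps_self hε⟩
  have hT : BddAbove T := ⟨b, fun t ht => ht.1.2⟩
  set u := sSup T
  have hau : a ≤ u := le_csSup hT haT
  have hub : u ≤ b := csSup_le ⟨a, haT⟩ fun t ht => ht.1.2
  have huT : u ∈ T := by
    refine ⟨⟨hau, hub⟩, ?_⟩
    rcases hau.eq_or_lt with hau | hau
    · exact ⟨∅, hau ▸ separatesJumps_self hε⟩
    obtain ⟨l, hlu, hosc⟩ := hf.exists_oscillation_lt_left hε ⟨hau, hub⟩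
    obtain ⟨t, ⟨-, S, hS⟩, hlt⟩ := exists_lt_of_lt_csSup ⟨a, haT⟩ hlu
    exact ⟨_, hS.extend hε fun p hp q hq =>
      hosc p ⟨hlt.trans_le hp.1, hp.2⟩ q ⟨hlt.trans_le hq.1, hq.2⟩⟩
  obtain ⟨S, hS⟩ := huT.2
  rcases hub.eq_or_lt with hub | hub
  · exact ⟨S, hub ▸ hS⟩
  obtain ⟨r, hur, hosc⟩ := hf.exists_oscillation_lt_right hε ⟨hau, hub⟩
  have hT' : min r b ∈ T := ⟨⟨hau.trans (lt_min hur hub).le, min_le_right r b⟩, _,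
    hS.extend hε fun p hp q hq =>
      hosc p ⟨hp.1, hp.2.trans_le (min_le_left r b)⟩ q ⟨hq.1, hq.2.trans_le (min_le_left r b)⟩⟩
  exact absurd (le_csSup hT hT') (lt_min hur hub).not_ge

end CadlagOn

namespace SeparatesJumps

variable {f : ℝ → ℝ} {ε c a b : ℝ} {S : Finset ℝ}

lemma abs_le_add_sum (hS : SeparatesJumps f ε a b S) {v : ℝ} (hv : v ∈ Icc a b) :
    |f v| ≤ ε + ∑ s ∈ insert a S, |f s| := by
  set T := (insert a S).filter (· ∈ Icc a v)
  have haT : a ∈ T := Finset.mem_filter.mpr ⟨Finset.mem_insert_self a S, le_rfl, hv.1⟩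
  set s := T.max' ⟨a, haT⟩
  have hsT : s ∈ T := T.max'_mem _
  obtain ⟨hsS, has, hsv⟩ := Finset.mem_filter.mp hsT
  have hjump : |f v - f s| < ε := hS s v has hsv hv.2 fun p hp hps =>
    hps.1.not_ge <| T.le_max' p <|
      Finset.mem_filter.mpr ⟨Finset.mem_insert_of_mem hp, has.trans hps.1.le, hps.2⟩
  have hs : |f s| ≤ ∑ s ∈ insert a S, |f s| :=
    Finset.single_le_sum (fun p _ => abs_nonneg (f p)) hsS
  linarith [abs_sub_abs_le_abs_sub (f v) (f s)]

lemma ofReal_max_abs_sub_sub_le (hS : SeparatesJumps f c a b S) (hc : 0 ≤ c) {M : ℝ}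
    (hM : ∀ v ∈ Icc a b, |f v| ≤ M) {u v : ℝ} (hu : a ≤ u) (huv : u ≤ v) (hv : v ≤ b) :
    ENNReal.ofReal (max (|f v - f u| - c) 0) ≤
      #(S.filter (· ∈ Ioc u v)) * ENNReal.ofReal (2 * M) := by
  rcases Finset.eq_empty_or_nonempty (S.filter (· ∈ Ioc u v)) with hfree | ⟨s, hs⟩
  · have hsmall := hS u v hu huv hv fun s hs hsuv =>
      Finset.notMem_empty s (hfree ▸ Finset.mem_filter.mpr ⟨hs, hsuv⟩)
    simp [max_eq_right (sub_nonpos.mpr hsmall.le)]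
  · have hcard : (1 : ℝ≥0∞) ≤ #(S.filter (· ∈ Ioc u v)) :=
      Nat.one_le_cast.mpr (Finset.card_pos.mpr ⟨s, hs⟩)
    have hdiff : |f v - f u| ≤ 2 * M := by
      linarith [abs_sub (f v) (f u), hM u ⟨hu, huv.trans hv⟩, hM v ⟨hu.trans huv, hv⟩]
    calc ENNReal.ofReal (max (|f v - f u| - c) 0)
        ≤ ENNReal.ofReal (2 * M) :=
          ENNReal.ofReal_le_ofReal (max_le (by linarith) ((abs_nonneg _).trans hdiff))
      _ ≤ _ := le_mul_of_one_le_left zero_le hcard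

end SeparatesJumps

lemma sum_card_filter_Ioc_le {S : Finset ℝ} {t : ℕ → ℝ} {n : ℕ}
    (ht : MonotoneOn t (Iic n)) :
    ∑ i ∈ Finset.range n, #(S.filter (· ∈ Ioc (t i) (t (i + 1)))) ≤ #S := by
  have hdisj : ∀ i j, i < j → j < n →
      ∀ s ∈ Ioc (t i) (t (i + 1)), s ∉ Ioc (t j) (t (j + 1)) := fun i j hij hjn s hi hj =>
    hj.1.not_ge <| hi.2.trans <| ht (by simp; omega) (by simp; omega) hij
  have hpair : (Finset.range n : Set ℕ).PairwiseDisjoint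
      fun i => S.filter (· ∈ Ioc (t i) (t (i + 1))) := by
    intro i hi j hj hij
    simp only [Finset.coe_range, Set.mem_Iio] at hi hj
    simp only [Function.onFun, Finset.disjoint_filter]
    rcases hij.lt_or_gt with h | h
    · exact fun s _ => hdisj i j h hj s
    · exact fun s _ hs hs' => hdisj j i h hi s hs' hs
  rw [← Finset.card_biUnion hpair]
  exact Finset.card_le_card (Finset.biUnion_subset.mpr fun i _ => Finset.filter_subset _ S)

lemma SeparatesJumps.truncVar_le {f : ℝ → ℝ} {a b c M : ℝ} {S : Finset ℝ}
    (hS : SeparatesJumps f c a b S) (hc : 0 ≤ c) (hM : ∀ v ∈ Icc a b, |f v| ≤ M) :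
    truncVar f a b c ≤ #S * ENNReal.ofReal (2 * M) := by
  refine iSup_le fun n => iSup_le fun t => iSup_le fun h0 => iSup_le fun hinc =>
    iSup_le fun hn => ?_
  have ht : MonotoneOn t (Iic n) :=
    (strictMonoOn_Iic_of_lt_succ fun m hm => by simpa using hinc m hm).monotoneOn
  have hmem : ∀ i ≤ n, a ≤ t i ∧ t i ≤ b := fun i hi =>
    ⟨h0.trans (ht (by simp) (by simpa using hi) (Nat.zero_le i)),
      (ht (by simpa using hi) (by simp) hi).trans hn⟩
  calc ∑ i ∈ Finset.range n, ENNReal.ofReal (max (|f (t (i + 1)) - f (t i)| - c) 0)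
      ≤ ∑ i ∈ Finset.range n,
          (#(S.filter (· ∈ Ioc (t i) (t (i + 1)))) : ℝ≥0∞) * ENNReal.ofReal (2 * M) := by
        refine Finset.sum_le_sum fun i hi => ?_
        have hi : i < n := Finset.mem_range.mp hi
        exact hS.ofReal_max_abs_sub_sub_le hc hM (hmem i hi.le).1 (hinc i hi).le
          (hmem (i + 1) hi).2
    _ ≤ #S * ENNReal.ofReal (2 * M) := by
        rw [← Finset.sum_mul]
        gcongr
        exact_mod_cast sum_card_filter_Ioc_le ht

/-- The truncated variation of a càdlàg function is finite. -/
theorem truncVar_lt_top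
    (a b c : ℝ) (hab : a < b) (hc : 0 < c) (f : ℝ → ℝ) (hf : CadlagOn f a b) :
    truncVar f a b c < ⊤ := by
  obtain ⟨S, hS⟩ := hf.exists_separatesJumps hab.le hc
  calc truncVar f a b c ≤ #S * ENNReal.ofReal (2 * (c + ∑ s ∈ insert a S, |f s|)) :=
        hS.truncVar_le hc.le fun v hv => hS.abs_le_add_sum hv
    _ < ⊤ := ENNReal.mul_lt_top (ENNReal.natCast_lt_top _) ENNReal.ofReal_lt_top
end

section
/- Let a < b, let f : [a,b] → ℝ be càdlàg on [a,b], and let c > 0. Define u : [a,b] → ℝ by u(a) := 0 and u(s) := UTV^c(f,[a,s]) for s ∈ (a,b]. Then u is nondecreasing on [a,b], u is right-continuous at every point of [a,b), u has a finite left limit at every point of (a,b], and u is continuous at every point of (a,b) at which f is continuous. -/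
open Set Filter Topology ENNReal

/-!
Everything rests on one splitting estimate: for `s ≤ s'`,
`UTV(a,s') ≤ UTV(a,s) + sup_{(s,s']} (f - f s) + sup_{u ∈ (s,s']} UTV(u,s')`,
obtained by cutting each partition at `s`: the increment straddling `s` exceeds its part below `s`
by at most the middle term. Where `f` has a one-sided limit, all increments of `f` inside a short
one-sided interval are below `c`, so the last term vanishes up to the single jump into the
endpoint. This gives right continuity, left continuity where `f` is continuous, and, by continuous
induction along `[a,b]`, finiteness of `UTV`; left limits then come from monotonicity.
-/

noncomputable def upTruncIncr (f : ℝ → ℝ) (c x y : ℝ) : ℝ≥0∞ :=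
  ENNReal.ofReal (max (f y - f x - c) 0)

section

variable {f : ℝ → ℝ} {a b c x y z B : ℝ}

theorem upTruncIncr_eq : upTruncIncr f c x y = ENNReal.ofReal (f y - f x - c) := by
  simp [upTruncIncr, ofReal_max]

theorem upTruncIncr_le_ofReal (h : f y - f x ≤ c + B) : upTruncIncr f c x y ≤ ENNReal.ofReal B :=
  upTruncIncr_eq.trans_le <| ofReal_le_ofReal (by linarith)

theorem upTruncIncr_eq_zero (h : f y - f x ≤ c) : upTruncIncr f c x y = 0 := by
  rw [upTruncIncr_eq, ofReal_eq_zero]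
  linarith

theorem upTruncIncr_le_add (h : f z - f y ≤ B) :
    upTruncIncr f c x z ≤ upTruncIncr f c x y + ENNReal.ofReal B := by
  simp only [upTruncIncr_eq]
  exact (ofReal_le_ofReal (by linarith)).trans ofReal_add_le

theorem sum_upTruncIncr_le_upTruncVar {t : ℕ → ℝ} {n : ℕ} (h0 : a ≤ t 0)
    (ht : ∀ i < n, t i < t (i + 1)) (hn : t n ≤ b) :
    ∑ i ∈ Finset.range n, upTruncIncr f c (t i) (t (i + 1)) ≤ upTruncVar f a b c :=
  le_iSup_of_le n <| le_iSup₂_of_le t h0 <| le_iSup₂_of_le ht hn le_rfl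

theorem upTruncVar_le {M : ℝ≥0∞}
    (h : ∀ n (t : ℕ → ℝ), a ≤ t 0 → (∀ i < n, t i < t (i + 1)) → t n ≤ b →
      ∑ i ∈ Finset.range n, upTruncIncr f c (t i) (t (i + 1)) ≤ M) :
    upTruncVar f a b c ≤ M :=
  iSup_le fun n => iSup₂_le fun t h0 => iSup₂_le fun ht hn => h n t h0 ht hn

theorem monotone_upTruncVar : Monotone fun b => upTruncVar f a b c := fun _ _ hb =>
  upTruncVar_le fun _ _ h0 ht hn => sum_upTruncIncr_le_upTruncVar h0 ht (hn.trans hb)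

theorem sum_add_upTruncIncr_le_upTruncVar (hc : 0 ≤ c) {t : ℕ → ℝ} {k : ℕ} (h0 : a ≤ t 0)
    (ht : ∀ i < k, t i < t (i + 1)) (hk : t k ≤ b) :
    ∑ i ∈ Finset.range k, upTruncIncr f c (t i) (t (i + 1)) + upTruncIncr f c (t k) b
      ≤ upTruncVar f a b c := by
  rcases hk.eq_or_lt with rfl | hkb
  · rw [upTruncIncr_eq_zero (by linarith), add_zero]
    exact sum_upTruncIncr_le_upTruncVar h0 ht le_rfl
  set t' := Function.update t (k + 1) b
  have ht' : ∀ i ≤ k, t' i = t i := fun i hi => Function.update_of_ne (by omega) _ _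
  have hlast : t' (k + 1) = b := Function.update_self ..
  have hsum : ∑ i ∈ Finset.range (k + 1), upTruncIncr f c (t' i) (t' (i + 1))
      = ∑ i ∈ Finset.range k, upTruncIncr f c (t i) (t (i + 1)) + upTruncIncr f c (t k) b := by
    rw [Finset.sum_range_succ, ht' k le_rfl, hlast]
    congr 1
    refine Finset.sum_congr rfl fun i hi => ?_
    have hi : i < k := Finset.mem_range.1 hi
    rw [ht' i hi.le, ht' (i + 1) hi]
  rw [← hsum]
  refine sum_upTruncIncr_le_upTruncVar ((ht' 0 (by omega)).symm ▸ h0) (fun i hi => ?_)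
    hlast.le
  rcases (Nat.lt_succ_iff.1 hi).lt_or_eq with hi | rfl
  · rw [ht' i hi.le, ht' (i + 1) hi]; exact ht i hi
  · rw [ht' i le_rfl, hlast]; exact hkb

theorem sum_Ico_upTruncIncr_le_upTruncVar {t : ℕ → ℝ} {k n : ℕ} (hkn : k ≤ n)
    (ht : ∀ i < n, t i < t (i + 1)) (hn : t n ≤ b) :
    ∑ i ∈ Finset.Ico k n, upTruncIncr f c (t i) (t (i + 1)) ≤ upTruncVar f (t k) b c := by
  rw [Finset.sum_Ico_eq_sum_range]
  exact sum_upTruncIncr_le_upTruncVar (t := fun i => t (k + i)) le_rfl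
    (fun i hi => ht (k + i) (by omega)) (by rwa [Nat.add_sub_cancel' hkn])

theorem upTruncVar_le_add_iSup (hc : 0 ≤ c) {s s' : ℝ} (hB : ∀ u ∈ Ioc s s', f u - f s ≤ B) :
    upTruncVar f a s' c ≤
      upTruncVar f a s c + ENNReal.ofReal B + ⨆ u ∈ Ioc s s', upTruncVar f u s' c := by
  refine upTruncVar_le fun n t h0 ht hn => ?_
  have hmono : MonotoneOn t (Iic n) := (strictMonoOn_Iic_of_lt_succ ht).monotoneOn
  have htail : ∀ k ≤ n, s < t k → ∑ i ∈ Finset.Ico k n, upTruncIncr f c (t i) (t (i + 1)) ≤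
      ⨆ u ∈ Ioc s s', upTruncVar f u s' c := fun k hk hsk =>
    (sum_Ico_upTruncIncr_le_upTruncVar hk ht hn).trans <|
      le_iSup₂_of_le (t k) ⟨hsk, (hmono hk self_mem_Iic hk).trans hn⟩ le_rfl
  by_cases h0s : t 0 ≤ s
  swap
  · rw [Finset.range_eq_Ico]
    exact (htail 0 n.zero_le (not_le.1 h0s)).trans le_add_self
  classical
  obtain ⟨k, hks, hkn, hgt⟩ : ∃ k, t k ≤ s ∧ k ≤ n ∧ ∀ i, k < i → i ≤ n → s < t i :=
    ⟨_, Nat.findGreatest_spec (P := fun i => t i ≤ s) n.zero_le h0s, Nat.findGreatest_le n,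
      fun i hi hin => not_le.1 (Nat.findGreatest_is_greatest hi hin)⟩
  rcases hkn.lt_or_eq with hkn | rfl
  · have hsk : s < t (k + 1) := hgt _ (lt_add_one k) hkn
    rw [← Finset.sum_range_add_sum_Ico _ hkn.le, Finset.sum_eq_sum_Ico_succ_bot hkn,
      ← add_assoc]
    refine add_le_add ?_ (htail (k + 1) hkn hsk)
    calc _ ≤ ∑ i ∈ Finset.range k, upTruncIncr f c (t i) (t (i + 1)) +
            (upTruncIncr f c (t k) s + ENNReal.ofReal B) :=
          add_le_add_right
            (upTruncIncr_le_add (hB _ ⟨hsk, (hmono hkn self_mem_Iic hkn).trans hn⟩)) _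
      _ ≤ _ := by
          rw [← add_assoc]
          exact add_le_add_left
            (sum_add_upTruncIncr_le_upTruncVar hc h0 (fun i hi => ht i (by omega)) hks) _
  · exact (sum_upTruncIncr_le_upTruncVar h0 ht hks).trans (le_self_add.trans le_self_add)

theorem upTruncVar_le_ofReal_of_sub_le {p q : ℝ}
    (hlt : ∀ u v, p ≤ u → u < v → v < q → f v - f u ≤ c)
    (hq : ∀ u, p ≤ u → u < q → f q - f u ≤ c + B) :
    upTruncVar f p q c ≤ ENNReal.ofReal B := by
  refine upTruncVar_le fun n t h0 ht hn => ?_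
  rcases n with _ | m
  · simp
  have hmono : MonotoneOn t (Iic (m + 1)) := (strictMonoOn_Iic_of_lt_succ ht).monotoneOn
  have hp : ∀ i ≤ m + 1, p ≤ t i := fun i hi =>
    h0.trans (hmono (Nat.zero_le _) hi (Nat.zero_le _))
  have hmq : t m < q := (ht m (lt_add_one m)).trans_le hn
  have hinner : ∀ i ∈ Finset.range m, upTruncIncr f c (t i) (t (i + 1)) = 0 := fun i hi => by
    have hi : i < m := Finset.mem_range.1 hi
    refine upTruncIncr_eq_zero <| hlt _ _ (hp i (by omega)) (ht i (by omega)) ?_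
    exact (hmono (mem_Iic.2 (by omega)) (mem_Iic.2 (by omega)) hi).trans_lt hmq
  rw [Finset.sum_range_succ, Finset.sum_eq_zero hinner, zero_add]
  rcases hn.lt_or_eq with hn | rfl
  · exact (upTruncIncr_eq_zero (hlt _ _ (hp m (by omega)) (ht m (by omega)) hn)).trans_le
      zero_le
  · exact upTruncIncr_le_ofReal (hq _ (hp m (by omega)) hmq)

theorem upTruncVar_self : upTruncVar f a a c = 0 :=
  nonpos_iff_eq_zero.1 <| (upTruncVar_le_ofReal_of_sub_le (B := 0)
    (fun _ _ _ _ _ => by linarith) fun _ _ _ => by linarith).trans_eq ofReal_zero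

end

theorem Icc_subset_of_forall_mem_nhdsGT_of_Ico_subset {α : Type*}
    [ConditionallyCompleteLinearOrder α] [TopologicalSpace α] [OrderTopology α]
    [DenselyOrdered α] {a b : α} {s : Set α} (ha : a ∈ s)
    (hleft : ∀ x ∈ Ioc a b, Ico a x ⊆ s → x ∈ s) (hright : ∀ x ∈ s ∩ Ico a b, s ∈ 𝓝[>] x) :
    Icc a b ⊆ s := by
  have hmem : ∀ x ∈ Icc a b, Ico a x ⊆ s → x ∈ s := fun x hx hsub =>
    hx.1.eq_or_lt.elim (fun h => h ▸ ha) fun h => hleft x ⟨h, hx.2⟩ hsub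
  -- Continuous induction runs on `{x | Ico a x ⊆ s}`, which is closed even when `s` is not.
  have hclosed : IsClosed {x | Ico a x ⊆ s} := by
    have : {x | Ico a x ⊆ s} = ⋂ y ∈ Ici a \ s, Iic y := by
      ext x
      simp only [mem_ofPred_eq, subset_def, mem_Ico, mem_iInter, Set.mem_sdiff, mem_Ici,
        mem_Iic]
      exact forall_congr' fun y =>
        ⟨fun h ⟨hay, hys⟩ => not_lt.1 fun hyx => hys (h ⟨hay, hyx⟩),
          fun h ⟨hay, hyx⟩ => by_contra fun hys => (h ⟨hay, hys⟩).not_gt hyx⟩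
    rw [this]
    exact isClosed_biInter fun y _ => isClosed_Iic
  refine fun x hx => hmem x hx <|
    (hclosed.inter isClosed_Icc).Icc_subset_of_forall_mem_nhdsGT_of_Icc_subset (by simp)
      (fun x hx hIcc => ?_) hx
  have hxs : x ∈ s := hmem x (Ico_subset_Icc_self hx) (hIcc ⟨hx.1, le_rfl⟩)
  obtain ⟨r, hxr, hr⟩ := (mem_nhdsGT_iff_exists_Ioo_subset' hx.2).1 (hright x ⟨hxs, hx⟩)
  filter_upwards [Ioo_mem_nhdsGT hxr] with y hy z hz
  rcases le_or_gt z x with hzx | hxz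
  · exact hzx.lt_or_eq.elim (fun h => hIcc ⟨hx.1, le_rfl⟩ ⟨hz.1, h⟩) fun h => h ▸ hxs
  · exact hr ⟨hxz, hz.2.trans hy.2⟩

theorem ENNReal.tendsto_nhds_of_forall_ofReal {α : Type*} {l : Filter α} {g : α → ℝ≥0∞}
    {y : ℝ≥0∞}
    (h : ∀ ε > 0, ∀ᶠ s in l, g s ≤ y + ENNReal.ofReal ε ∧ y ≤ g s + ENNReal.ofReal ε) :
    Tendsto g l (𝓝 y) := by
  refine ENNReal.tendsto_nhds_of_Icc fun ε hε => ?_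
  obtain ⟨r, -, hr0, hrε⟩ := ENNReal.lt_iff_exists_real_btwn.1 hε
  filter_upwards [h r (ofReal_pos.1 hr0)] with s hs
  exact ⟨tsub_le_iff_right.2 (hs.2.trans (add_le_add_right hrε.le _)),
    hs.1.trans (add_le_add_right hrε.le _)⟩

section

variable {f : ℝ → ℝ} {a c x : ℝ}

theorem eventually_upTruncVar_le_add_of_tendsto_nhdsGT (hc : 0 < c)
    (hf : Tendsto f (𝓝[>] x) (𝓝 (f x))) {ε : ℝ} (hε : 0 < ε) :
    ∀ᶠ y in 𝓝[>] x, upTruncVar f a y c ≤ upTruncVar f a x c + ENNReal.ofReal ε := by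
  obtain ⟨δ, hδ, hδε, hδc⟩ : ∃ δ > 0, δ ≤ ε / 2 ∧ δ ≤ c / 2 :=
    ⟨min ε c / 2, by positivity,
      by gcongr; exact min_le_left .., by gcongr; exact min_le_right ..⟩
  obtain ⟨r, hxr, hr⟩ := mem_nhdsGT_iff_exists_Ioo_subset.1 <|
    hf (Ioo_mem_nhds (sub_lt_self _ hδ) (lt_add_of_pos_right _ hδ))
  have hclose : ∀ v ∈ Ioo x r, f v ∈ Ioo (f x - δ) (f x + δ) := hr
  filter_upwards [Ioo_mem_nhdsGT hxr] with y hy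
  have htail : ⨆ u ∈ Ioc x y, upTruncVar f u y c ≤ ENNReal.ofReal 0 := by
    refine iSup₂_le fun u hu => upTruncVar_le_ofReal_of_sub_le (fun v w huv hvw hwy => ?_)
      fun v huv hvy => ?_
    · have hv := hclose v ⟨hu.1.trans_le huv, hvw.trans (hwy.trans hy.2)⟩
      have hw := hclose w ⟨hu.1.trans_le (huv.trans hvw.le), hwy.trans hy.2⟩
      linarith [hv.1, hw.2]
    · have hv := hclose v ⟨hu.1.trans_le huv, hvy.trans hy.2⟩
      have hy' := hclose y hy
      linarith [hv.1, hy'.2]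
  calc upTruncVar f a y c
      ≤ upTruncVar f a x c + ENNReal.ofReal ε + ENNReal.ofReal 0 := by
        refine (upTruncVar_le_add_iSup hc.le fun u hu => ?_).trans
          (add_le_add_right htail _)
        linarith [(hclose u ⟨hu.1, hu.2.trans_lt hy.2⟩).2]
    _ = upTruncVar f a x c + ENNReal.ofReal ε := by rw [ofReal_zero, add_zero]

theorem eventually_upTruncVar_le_add_of_tendsto_nhdsLT (hc : 0 < c) {L : ℝ}
    (hf : Tendsto f (𝓝[<] x) (𝓝 L)) {ε : ℝ} (hε : 0 < ε) :
    ∀ᶠ s in 𝓝[<] x,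
      upTruncVar f a x c ≤ upTruncVar f a s c + ENNReal.ofReal (2 * |f x - L| + ε) := by
  obtain ⟨δ, hδ, hδε, hδc⟩ : ∃ δ > 0, δ ≤ ε / 2 ∧ δ ≤ c / 2 :=
    ⟨min ε c / 2, by positivity,
      by gcongr; exact min_le_left .., by gcongr; exact min_le_right ..⟩
  have hjump := le_abs_self (f x - L)
  obtain ⟨l, hlx, hl⟩ := mem_nhdsLT_iff_exists_Ioo_subset.1 <|
    hf (Ioo_mem_nhds (sub_lt_self _ hδ) (lt_add_of_pos_right _ hδ))
  have hclose : ∀ v ∈ Ioo l x, f v ∈ Ioo (L - δ) (L + δ) := hl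
  filter_upwards [Ioo_mem_nhdsLT hlx] with s hs
  have htail : ⨆ u ∈ Ioc s x, upTruncVar f u x c ≤ ENNReal.ofReal |f x - L| := by
    refine iSup₂_le fun u hu => upTruncVar_le_ofReal_of_sub_le (fun v w huv hvw hwx => ?_)
      fun v huv hvx => ?_
    · have hv := hclose v ⟨hs.1.trans (hu.1.trans_le huv), hvw.trans hwx⟩
      have hw := hclose w ⟨hs.1.trans (hu.1.trans_le (huv.trans hvw.le)), hwx⟩
      linarith [hv.1, hw.2]
    · linarith [(hclose v ⟨hs.1.trans (hu.1.trans_le huv), hvx⟩).1]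
  have hB : ∀ u ∈ Ioc s x, f u - f s ≤ |f x - L| + 2 * δ := by
    intro u hu
    have hs' := hclose s hs
    rcases hu.2.lt_or_eq with hux | rfl
    · linarith [(hclose u ⟨hs.1.trans hu.1, hux⟩).2, hs'.1, abs_nonneg (f x - L)]
    · linarith [hs'.1]
  calc upTruncVar f a x c
      ≤ upTruncVar f a s c + ENNReal.ofReal (|f x - L| + 2 * δ) + ENNReal.ofReal |f x - L| :=
        (upTruncVar_le_add_iSup hc.le hB).trans (add_le_add_right htail _)
    _ = upTruncVar f a s c + ENNReal.ofReal (|f x - L| + 2 * δ + |f x - L|) := by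
        rw [add_assoc, ← ofReal_add (by positivity) (abs_nonneg _)]
    _ ≤ upTruncVar f a s c + ENNReal.ofReal (2 * |f x - L| + ε) := by
        exact add_le_add_right (ofReal_le_ofReal (by linarith)) _

theorem tendsto_upTruncVar_nhdsGT (hc : 0 < c) (hf : Tendsto f (𝓝[>] x) (𝓝 (f x))) :
    Tendsto (fun y => upTruncVar f a y c) (𝓝[>] x) (𝓝 (upTruncVar f a x c)) :=
  ENNReal.tendsto_nhds_of_forall_ofReal fun ε hε => by
    filter_upwards [eventually_upTruncVar_le_add_of_tendsto_nhdsGT hc hf hε,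
      self_mem_nhdsWithin] with y hy hxy
    exact ⟨hy, (monotone_upTruncVar (le_of_lt hxy)).trans le_self_add⟩

theorem tendsto_upTruncVar_nhdsLT (hc : 0 < c) (hf : Tendsto f (𝓝[<] x) (𝓝 (f x))) :
    Tendsto (fun s => upTruncVar f a s c) (𝓝[<] x) (𝓝 (upTruncVar f a x c)) :=
  ENNReal.tendsto_nhds_of_forall_ofReal fun ε hε => by
    filter_upwards [eventually_upTruncVar_le_add_of_tendsto_nhdsLT hc hf hε,
      self_mem_nhdsWithin] with s hs hsx
    refine ⟨(monotone_upTruncVar (le_of_lt hsx)).trans le_self_add, ?_⟩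
    simpa using hs

theorem CadlagOn.upTruncVar_ne_top {b : ℝ} (hc : 0 < c) (hf : CadlagOn f a b) :
    ∀ x ∈ Icc a b, upTruncVar f a x c ≠ ⊤ := by
  refine Icc_subset_of_forall_mem_nhdsGT_of_Ico_subset (s := {x | upTruncVar f a x c ≠ ⊤})
    (by simp [upTruncVar_self]) (fun x hx hlt => ?_) fun x ⟨hxfin, hx⟩ => ?_
  · obtain ⟨L, hL⟩ := hf.2 x hx
    obtain ⟨s, hs, hsx⟩ :=
      ((eventually_upTruncVar_le_add_of_tendsto_nhdsLT hc hL one_pos).and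
        (Ioo_mem_nhdsLT hx.1)).exists
    exact ne_top_of_le_ne_top (add_ne_top.2 ⟨hlt ⟨hsx.1.le, hsx.2⟩, ofReal_ne_top⟩) hs
  · filter_upwards [eventually_upTruncVar_le_add_of_tendsto_nhdsGT hc (hf.1 x hx) one_pos]
      with y hy
    exact ne_top_of_le_ne_top (add_ne_top.2 ⟨hxfin, ofReal_ne_top⟩) hy

end

theorem upTruncVar_monotone_cadlag_general
    (a b c : ℝ) (hc : 0 < c) (f : ℝ → ℝ) (hf : CadlagOn f a b) :
    MonotoneOn (fun s => (upTruncVar f a s c).toReal) (Set.Icc a b) ∧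
    (∀ x ∈ Set.Ico a b, Filter.Tendsto (fun s => (upTruncVar f a s c).toReal)
      (𝓝[>] x) (𝓝 ((upTruncVar f a x c).toReal))) ∧
    (∀ x ∈ Set.Ioc a b, ∃ L : ℝ, Filter.Tendsto (fun s => (upTruncVar f a s c).toReal)
      (𝓝[<] x) (𝓝 L)) ∧
    (∀ x ∈ Set.Ioo a b, ContinuousWithinAt f (Set.Icc a b) x →
      ContinuousWithinAt (fun s => (upTruncVar f a s c).toReal) (Set.Icc a b) x) := by
  have hfin := hf.upTruncVar_ne_top hc
  have hmono : MonotoneOn (fun s => (upTruncVar f a s c).toReal) (Icc a b) :=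
    fun _ _ y hy hxy => toReal_mono (hfin y hy) (monotone_upTruncVar hxy)
  have hright : ∀ x ∈ Ico a b, Tendsto (fun s => (upTruncVar f a s c).toReal)
      (𝓝[>] x) (𝓝 ((upTruncVar f a x c).toReal)) := fun x hx =>
    (ENNReal.tendsto_toReal (hfin x (Ico_subset_Icc_self hx))).comp
      (tendsto_upTruncVar_nhdsGT hc (hf.1 x hx))
  refine ⟨hmono, hright, fun x hx => ?_, fun x hx hfx => ?_⟩
  · have hsub : Ioo a x ⊆ Icc a b := Ioo_subset_Icc_self.trans (Icc_subset_Icc_right hx.2)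
    exact ⟨_, (hmono.mono hsub).tendsto_nhdsWithin_Ioo_left (nonempty_Ioo.2 hx.1)
      ⟨_, forall_mem_image.2 fun s hs => hmono (hsub hs) ⟨hx.1.le, hx.2⟩ hs.2.le⟩⟩
  · have hfx' : ContinuousAt f x := hfx.continuousAt (Icc_mem_nhds hx.1 hx.2)
    have hleft := (ENNReal.tendsto_toReal (hfin x (Ioo_subset_Icc_self hx))).comp
      (tendsto_upTruncVar_nhdsLT (a := a) hc (hfx'.tendsto.mono_left nhdsWithin_le_nhds))
    exact (continuousAt_iff_continuous_left_right.2
      ⟨continuousWithinAt_Iio_iff_Iic.1 hleft,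
        continuousWithinAt_Ioi_iff_Ici.1 (hright x (Ioo_subset_Ico_self hx))⟩).continuousWithinAt

/-- The function `s ↦ UTV^c(f,[a,s])` is nondecreasing, càdlàg on `[a,b]`, and continuous
at every point of `(a,b)` at which `f` is continuous. -/
theorem upTruncVar_monotone_cadlag
    (a b c : ℝ) (hab : a < b) (hc : 0 < c) (f : ℝ → ℝ) (hf : CadlagOn f a b) :
    MonotoneOn (fun s => (upTruncVar f a s c).toReal) (Set.Icc a b) ∧
    (∀ x ∈ Set.Ico a b, Filter.Tendsto (fun s => (upTruncVar f a s c).toReal)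
      (𝓝[>] x) (𝓝 ((upTruncVar f a x c).toReal))) ∧
    (∀ x ∈ Set.Ioc a b, ∃ L : ℝ, Filter.Tendsto (fun s => (upTruncVar f a s c).toReal)
      (𝓝[<] x) (𝓝 L)) ∧
    (∀ x ∈ Set.Ioo a b, ContinuousWithinAt f (Set.Icc a b) x →
      ContinuousWithinAt (fun s => (upTruncVar f a s c).toReal) (Set.Icc a b) x) :=
  upTruncVar_monotone_cadlag_general a b c hc f hf
end
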